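/- arXiv:1112.5718 — 3 statements merged into one kernel-verified Lean document; each statement's English description precedes it below -/
import Mathlib

section
/- Let Fix(Ψ) = {h ∈ C(K) : Ψ(h) = h} and let A be the norm-closed subalgebra of C(K) (with the supremum norm) generated by Fix(Ψ). Then for every f ∈ A the sequence {Ψ^n(f)}_{n≥1} converges uniformly on K. -/
open MeasureTheory Filter Topology ComplexOrder

/-- `Φ` is a Markov operator on the bounded Borel measurable functions on `U`:
for each `x` there is a Borel probability measure `P x` representing `Φ` at `x`. -/
def IsMarkovOperator {U : Type*} [MeasurableSpace U]
    (Φ : (U → ℂ) → (U → ℂ)) : Prop :=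
  ∀ x : U, ∃ P : Measure U, IsProbabilityMeasure P ∧
    ∀ f : U → ℂ, Measurable f → (∃ C : ℝ, ∀ y, ‖f y‖ ≤ C) →
      Φ f x = ∫ y, f y ∂P

/-- `Φ` has the strong Feller property: it maps bounded Borel measurable
functions to continuous functions. -/
def HasStrongFeller {U : Type*} [MeasurableSpace U] [TopologicalSpace U]
    (Φ : (U → ℂ) → (U → ℂ)) : Prop :=
  ∀ f : U → ℂ, Measurable f → (∃ C : ℝ, ∀ y, ‖f y‖ ≤ C) → Continuous (Φ f)

/-- Boundary condition (A): for each boundary point `x` there is a barrier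
`h ∈ C(K)` with `h x = 0`, `h < 0` off `x`, and `Φ (h_U) ≥ h_U` on `U`. -/
def CondA {K : Type*} [TopologicalSpace K] (U : Set K)
    (Φ : (↥U → ℂ) → (↥U → ℂ)) : Prop :=
  ∀ x ∈ Uᶜ, ∃ h : C(K, ℂ), h x = 0 ∧ (∀ y : K, y ≠ x → h y < 0) ∧
    ∀ u : ↥U, h u.1 ≤ Φ (fun v : ↥U => h v.1) u

/-- Maximum principle (B): every real-valued `g ∈ C(K)` with `Φ (g_U) ≥ g_U`
on `U` attaining its global maximum inside `U` is constant. -/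
def CondB {K : Type*} [TopologicalSpace K] (U : Set K)
    (Φ : (↥U → ℂ) → (↥U → ℂ)) : Prop :=
  ∀ g : C(K, ℂ), (∀ x : K, (g x).im = 0) →
    (∀ u : ↥U, g u.1 ≤ Φ (fun v : ↥U => g v.1) u) →
    (∃ z ∈ U, ∀ x : K, g x ≤ g z) →
    ∀ x y : K, g x = g y

/-- The map `Ψ` : `Ψ f = Φ (f_U)` on `U` and `Ψ f = f` on `∂U = K \ U`. -/
noncomputable def psiFun {K : Type*} (U : Set K)
    (Φ : (↥U → ℂ) → (↥U → ℂ)) (f : K → ℂ) : K → ℂ :=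
  open Classical in fun x => if hx : x ∈ U then Φ (fun v : ↥U => f v.1) ⟨x, hx⟩ else f x

/-!
`Ψ` is integration against probability measures `μ x`: the image of `P x` for `x ∈ U`, and the
Dirac mass at `x` for `x ∉ U`, where `Ψ` is the identity. The strong Feller property gives
continuity of `Ψ g` on `U`, and the barriers of condition (A) give continuity at the boundary, so
`Ψ` restricts to a contraction `T` of `C(K)`; hence the functions whose `T`-orbit converges form a
closed subspace, and it suffices to show it contains the algebra generated by the fixed points.

Every fixed point is a linear combination of nonnegative real fixed points, and by polarization the
algebra these generate is spanned by the powers `w ^ k`. For such a power Jensen's inequality gives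
`w ^ k ≤ T (w ^ k)`, so `Tⁿ (w ^ k)` increases to a bounded harmonic function. That function is
continuous on `U` by the strong Feller property and at each boundary point because it is squeezed
between `w ^ k` and the superharmonic majorants built from the barrier; Dini's theorem then makes
the convergence uniform.
-/

section ConvergentOrbits

variable {𝕜 E : Type*} [NontriviallyNormedField 𝕜] [NormedAddCommGroup E] [NormedSpace 𝕜 E]

namespace ContinuousLinearMap

def convergentOrbits (T : E →L[𝕜] E) : Submodule 𝕜 E where
  carrier := {f | ∃ p, Tendsto (fun n => (T ^ n) f) atTop (𝓝 p)}
  add_mem' := by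
    rintro f g ⟨p, hp⟩ ⟨q, hq⟩
    exact ⟨p + q, by simpa only [map_add] using hp.add hq⟩
  zero_mem' := ⟨0, by simp⟩
  smul_mem' := by
    rintro c f ⟨p, hp⟩
    exact ⟨c • p, by simpa only [map_smul] using hp.const_smul c⟩

theorem norm_pow_apply_le {T : E →L[𝕜] E} (hT : ‖T‖ ≤ 1) (n : ℕ) (f : E) :
    ‖(T ^ n) f‖ ≤ ‖f‖ := by
  induction n with
  | zero => simp
  | succ n ih =>
    rw [pow_succ', mul_apply_eq_comp]
    exact (T.le_of_opNorm_le hT _).trans (by rwa [one_mul])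

theorem isClosed_convergentOrbits [CompleteSpace E] {T : E →L[𝕜] E} (hT : ‖T‖ ≤ 1) :
    IsClosed (T.convergentOrbits : Set E) := by
  refine isClosed_of_closure_subset fun f hf => cauchySeq_tendsto_of_complete ?_
  refine Metric.cauchySeq_iff'.2 fun ε hε => ?_
  obtain ⟨g, ⟨p, hp⟩, hfg⟩ := Metric.mem_closure_iff.1 hf (ε / 3) (by positivity)
  obtain ⟨N, hN⟩ := Metric.cauchySeq_iff'.1 hp.cauchySeq (ε / 3) (by positivity)
  have hclose : ∀ n, dist ((T ^ n) g) ((T ^ n) f) < ε / 3 := fun n => by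
    rw [dist_eq_norm, ← map_sub]
    exact (norm_pow_apply_le hT n _).trans_lt (by rwa [← dist_eq_norm, dist_comm])
  refine ⟨N, fun n hn => ?_⟩
  calc dist ((T ^ n) f) ((T ^ N) f)
      ≤ dist ((T ^ n) f) ((T ^ n) g) + dist ((T ^ n) g) ((T ^ N) g)
          + dist ((T ^ N) g) ((T ^ N) f) := dist_triangle4 _ _ _ _
    _ < ε / 3 + ε / 3 + ε / 3 := by
      gcongr
      · rw [dist_comm]; exact hclose n
      · exact hN n hn
      · exact hclose N
    _ = ε := by ring

end ContinuousLinearMap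

end ConvergentOrbits

open Multiset in
theorem Multiset.sum_map_powerset_cons_neg_one_pow {R : Type*} [CommRing R] (f : R → R) (a : R)
    (m : Multiset R) :
    ((a ::ₘ m).powerset.map fun t => (-1) ^ (card (a ::ₘ m) - card t) * f t.sum).sum =
      (m.powerset.map fun t => (-1) ^ (card m - card t) * (f (a + t.sum) - f t.sum)).sum := by
  rw [card_cons, powerset_cons, map_add, sum_add, map_map, add_comm, ← Multiset.sum_map_add]
  refine congrArg sum (map_congr rfl fun t ht => ?_)
  rw [Function.comp_apply, card_cons, sum_cons, Nat.add_sub_add_right,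
    Nat.succ_sub (card_le_card (mem_powerset.1 ht)), pow_succ]
  ring

open Multiset in
/-- Polarization: the iterated finite difference of `(·) ^ e` kills degrees below `card m`. -/
theorem Multiset.sum_map_neg_one_pow_mul_sum_pow {R : Type*} [CommRing R] (m : Multiset R)
    {e : ℕ} (he : e ≤ card m) :
    (m.powerset.map fun t => (-1) ^ (card m - card t) * t.sum ^ e).sum =
      if e = card m then ((card m).factorial : R) * m.prod else 0 := by
  induction m using Multiset.induction_on generalizing e with
  | empty => simp_all
  | cons a m ih =>
    have hdiff : ∀ t : Multiset R, (-1) ^ (card m - card t) * ((a + t.sum) ^ e - t.sum ^ e) =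
        ∑ k ∈ Finset.range e,
          a ^ (e - k) * (e.choose k : R) * ((-1) ^ (card m - card t) * t.sum ^ k) := by
      intro t
      rw [add_comm, add_pow, Finset.sum_range_succ]
      simp only [Nat.sub_self, pow_zero, Nat.choose_self, Nat.cast_one, mul_one,
        add_sub_cancel_right, Finset.mul_sum]
      exact Finset.sum_congr rfl fun k _ => by ring
    rw [sum_map_powerset_cons_neg_one_pow (· ^ e)]
    simp only [hdiff, Finset.sum_eq_multiset_sum]
    rw [Multiset.sum_map_sum_map]
    simp only [← Finset.sum_eq_multiset_sum, Multiset.sum_map_mul_left]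
    rcases Nat.lt_or_ge e (card m + 1) with hlt | hge
    · rw [card_cons, if_neg hlt.ne]
      refine Finset.sum_eq_zero fun k hk => ?_
      rw [Finset.mem_range] at hk
      rw [ih (by omega), if_neg (by omega), mul_zero]
    · obtain rfl : e = card m + 1 := le_antisymm (by simpa using he) hge
      rw [card_cons, if_pos rfl, Finset.sum_eq_single (card m) (fun k hk hne => by
        rw [ih (by simp at hk; omega), if_neg hne, mul_zero]) (by simp), ih le_rfl, if_pos rfl,
        prod_cons, Nat.choose_succ_self_right, Nat.factorial_succ, Nat.add_sub_cancel_left]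
      push_cast
      ring

theorem Algebra.adjoin_le_span_pow {𝕜 A : Type*} [Field 𝕜] [CharZero 𝕜] [CommRing A]
    [Algebra 𝕜 A] (S : AddSubmonoid A) :
    Subalgebra.toSubmodule (Algebra.adjoin 𝕜 (S : Set A)) ≤
      Submodule.span 𝕜 {x | ∃ a ∈ S, ∃ k : ℕ, a ^ k = x} := by
  rw [Algebra.adjoin_eq_span, Submodule.span_le]
  rintro _ hx
  obtain ⟨m, hm, rfl⟩ := Submonoid.exists_multiset_of_mem_closure hx
  have hpolar := m.sum_map_neg_one_pow_mul_sum_pow le_rfl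
  rw [if_pos rfl, ← map_natCast (algebraMap 𝕜 A), ← Algebra.smul_def] at hpolar
  have hfact : ((Multiset.card m).factorial : 𝕜) ≠ 0 := Nat.cast_ne_zero.2 (Nat.factorial_ne_zero _)
  rw [SetLike.mem_coe, ← Submodule.smul_mem_iff _ hfact, ← hpolar]
  refine multiset_sum_mem _ fun x hx => ?_
  obtain ⟨t, ht, rfl⟩ := Multiset.mem_map.1 hx
  have htS : t.sum ∈ S := S.multiset_sum_mem t fun a ha =>
    hm a (Multiset.mem_of_le (Multiset.mem_powerset.1 ht) ha)
  rw [← map_one (algebraMap 𝕜 A), ← map_neg, ← map_pow, ← Algebra.smul_def]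
  exact Submodule.smul_mem _ _ (Submodule.subset_span ⟨_, htS, _, rfl⟩)

namespace ContinuousMap

variable {X : Type*} [TopologicalSpace X]

noncomputable def ofRealAlgHom (𝕜 : Type*) [RCLike 𝕜] : C(X, ℝ) →ₐ[ℝ] C(X, 𝕜) :=
  RCLike.ofRealAm.compLeftContinuous ℝ RCLike.continuous_ofReal

@[simp]
theorem ofRealAlgHom_apply {𝕜 : Type*} [RCLike 𝕜] (g : C(X, ℝ)) (x : X) :
    ofRealAlgHom 𝕜 g x = (g x : 𝕜) := rfl

theorem continuous_ofRealAlgHom (𝕜 : Type*) [RCLike 𝕜] :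
    Continuous (ofRealAlgHom (X := X) 𝕜) :=
  continuous_postcomp _

theorem integrable [CompactSpace X] [MeasurableSpace X] [OpensMeasurableSpace X]
    {E : Type*} [NormedAddCommGroup E] {μ : Measure X} [IsFiniteMeasure μ] (f : C(X, E)) :
    Integrable f μ :=
  .of_bound f.continuous.aestronglyMeasurable_of_compactSpace ‖f‖
    (ae_of_all _ f.norm_coe_le_norm)

end ContinuousMap

section Averaging

variable {K : Type*} [MetricSpace K] [CompactSpace K] [MeasurableSpace K] [BorelSpace K]
  (μ : K → Measure K) [∀ x, IsProbabilityMeasure (μ x)]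

def IsFeller : Prop :=
  ∀ g : C(K, ℝ), Continuous fun x => ∫ y, g y ∂μ x

variable {μ}

namespace IsFeller

theorem continuous_integral {𝕜 : Type*} [RCLike 𝕜] (hμ : IsFeller μ) (f : C(K, 𝕜)) :
    Continuous fun x => ∫ y, f y ∂μ x := by
  have hre := hμ ⟨fun y => RCLike.re (f y), by fun_prop⟩
  have him := hμ ⟨fun y => RCLike.im (f y), by fun_prop⟩
  simp only [ContinuousMap.coe_mk] at hre him
  simp_rw [← integral_re_add_im f.integrable]
  fun_prop

noncomputable def averagingOp (hμ : IsFeller μ) (𝕜 : Type*) [RCLike 𝕜] :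
    C(K, 𝕜) →L[𝕜] C(K, 𝕜) :=
  LinearMap.mkContinuous
    { toFun f := ⟨fun x => ∫ y, f y ∂μ x, hμ.continuous_integral f⟩
      map_add' f g := by ext x; exact integral_add f.integrable g.integrable
      map_smul' c f := by ext x; exact integral_smul c f }
    1 fun f => by
      rw [one_mul]
      refine (ContinuousMap.norm_le _ (norm_nonneg f)).2 fun x => ?_
      simpa using norm_integral_le_of_norm_le_const (μ := μ x)
        (Eventually.of_forall f.norm_coe_le_norm)

variable (hμ : IsFeller μ) {𝕜 : Type*} [RCLike 𝕜]

@[simp]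
theorem averagingOp_apply (f : C(K, 𝕜)) (x : K) :
    hμ.averagingOp 𝕜 f x = ∫ y, f y ∂μ x := rfl

theorem norm_averagingOp_le : ‖hμ.averagingOp 𝕜‖ ≤ 1 :=
  LinearMap.mkContinuous_norm_le _ zero_le_one _

theorem averagingOp_one : hμ.averagingOp 𝕜 1 = 1 := by
  ext; simp

theorem monotone_averagingOp : Monotone (hμ.averagingOp ℝ) :=
  fun f g hfg _ => integral_mono f.integrable g.integrable hfg

theorem averagingOp_ofRealAlgHom (g : C(K, ℝ)) :
    hμ.averagingOp 𝕜 (ContinuousMap.ofRealAlgHom 𝕜 g) =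
      ContinuousMap.ofRealAlgHom 𝕜 (hμ.averagingOp ℝ g) := by
  ext x
  simp [integral_ofReal]

theorem averagingOp_comp_clm (L : 𝕜 →L[ℝ] ℝ) (f : C(K, 𝕜)) :
    hμ.averagingOp ℝ ((L : C(𝕜, ℝ)).comp f) = (L : C(𝕜, ℝ)).comp (hμ.averagingOp 𝕜 f) := by
  ext x
  exact L.integral_comp_comm f.integrable

theorem pow_le_averagingOp_pow {v : C(K, ℝ)} (hv : 0 ≤ v) (hfix : hμ.averagingOp ℝ v = v)
    (k : ℕ) : v ^ k ≤ hμ.averagingOp ℝ (v ^ k) := fun x => by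
  have hjensen := (convexOn_pow k).map_integral_le (μ := μ x) (continuous_pow k).continuousOn
    isClosed_Ici (ae_of_all _ fun y => Set.mem_Ici.2 (hv y)) v.integrable (v ^ k).integrable
  have hvx : ∫ y, v y ∂μ x = v x := DFunLike.congr_fun hfix x
  simpa [hvx] using hjensen

end IsFeller

end Averaging

section Barrier

variable {K : Type*} [MetricSpace K] [MeasurableSpace K] {μ : K → Measure K}

def IsSuperharmonic (μ : K → Measure K) (q : K → ℝ) : Prop :=
  ∀ x, ∫ y, q y ∂μ x ≤ q x

structure IsBarrier (μ : K → Measure K) (x₀ : K) (h : C(K, ℝ)) : Prop where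
  apply_self : h x₀ = 0
  neg_of_ne : ∀ y ≠ x₀, h y < 0
  le_integral : ∀ x, h x ≤ ∫ y, h y ∂μ x

namespace IsBarrier

variable {x₀ : K} {h : C(K, ℝ)}

theorem nonpos (hh : IsBarrier μ x₀ h) (y : K) : h y ≤ 0 := by
  rcases eq_or_ne y x₀ with rfl | hy
  · exact hh.apply_self.le
  · exact (hh.neg_of_ne y hy).le

variable [CompactSpace K] [BorelSpace K] [∀ x, IsProbabilityMeasure (μ x)]

/-- Adding a large multiple of `-h` lifts `g x₀ + ε` above `g` away from `x₀`. -/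
theorem exists_superharmonic_majorant (hh : IsBarrier μ x₀ h) (g : C(K, ℝ)) {ε : ℝ}
    (hε : 0 < ε) : ∃ q : C(K, ℝ), g ≤ q ∧ q x₀ = g x₀ + ε ∧ IsSuperharmonic μ q := by
  set C := {y | g x₀ + ε ≤ g y}
  have hC : IsCompact C := (isClosed_le continuous_const g.continuous).isCompact
  have hhC : ∀ y ∈ C, 0 < -h y := fun y hy => neg_pos.2 <| hh.neg_of_ne y <| by
    rintro rfl
    linarith [show g y + ε ≤ g y from hy]
  obtain ⟨M, hM⟩ := hC.bddAbove_image (f := fun y => (g y - g x₀) / -h y)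
    ((g.continuous.sub continuous_const).continuousOn.div
      (continuous_neg.comp h.continuous).continuousOn fun y hy => (hhC y hy).ne')
  set M' := max M 0
  have hle : ∀ y, g y ≤ g x₀ + ε - M' * h y := by
    intro y
    have hM'h : 0 ≤ M' * -h y := mul_nonneg (le_max_right _ _) (neg_nonneg.2 (hh.nonpos y))
    by_cases hy : y ∈ C
    · have hratio := (div_le_iff₀ (hhC y hy)).1 (hM ⟨y, hy, rfl⟩)
      have hM' : M * -h y ≤ M' * -h y :=
        mul_le_mul_of_nonneg_right (le_max_left _ _) (hhC y hy).le
      linarith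
    · linarith [not_le.1 (show ¬ g x₀ + ε ≤ g y from hy)]
  refine ⟨ContinuousMap.const K (g x₀ + ε) - M' • h, hle, by simp [hh.apply_self], fun x => ?_⟩
  have hint := h.integrable (μ := μ x)
  simp only [ContinuousMap.sub_apply, ContinuousMap.const_apply, ContinuousMap.smul_apply,
    smul_eq_mul]
  rw [integral_sub (integrable_const _) (hint.const_mul M'), integral_const, integral_const_mul]
  simp only [probReal_univ, one_smul]
  nlinarith [hh.le_integral x, le_max_right M 0]

theorem upperSemicontinuousAt (hh : IsBarrier μ x₀ h) (g : C(K, ℝ)) {u : K → ℝ}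
    (hu₀ : g x₀ ≤ u x₀) (hu : ∀ q : C(K, ℝ), g ≤ q → IsSuperharmonic μ q → ∀ x, u x ≤ q x) :
    UpperSemicontinuousAt u x₀ := by
  intro y hy
  obtain ⟨q, hgq, hq₀, hq⟩ :=
    hh.exists_superharmonic_majorant g (ε := (y - g x₀) / 2) (by linarith)
  have : ∀ᶠ z in 𝓝 x₀, q z < y :=
    q.continuous.continuousAt.eventually_lt continuousAt_const (by rw [hq₀]; linarith)
  filter_upwards [this] with z hz using (hu q hgq hq z).trans_lt hz

theorem continuousAt_integral (hh : IsBarrier μ x₀ h) (hx₀ : μ x₀ = Measure.dirac x₀)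
    (g : C(K, ℝ)) : ContinuousAt (fun x => ∫ y, g y ∂μ x) x₀ := by
  have husc : ∀ g : C(K, ℝ), UpperSemicontinuousAt (fun x => ∫ y, g y ∂μ x) x₀ := fun g =>
    hh.upperSemicontinuousAt g (by simp [hx₀]) fun q hgq hq x =>
      (integral_mono g.integrable q.integrable hgq).trans (hq x)
  refine continuousAt_iff_lower_upperSemicontinuousAt.2 ⟨?_, husc g⟩
  rw [← upperSemicontinuousAt_neg_iff]
  simpa [Pi.neg_def, integral_neg] using husc (-g)

end IsBarrier

end Barrier

section RegularStrongFeller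

variable {K : Type*} [MetricSpace K] [MeasurableSpace K]

structure IsRegularStrongFeller (U : Set K) (μ : K → Measure K) : Prop where
  isOpen : IsOpen U
  eq_dirac : ∀ x ∉ U, μ x = Measure.dirac x
  continuousOn_integral : ∀ g : K → ℝ, Measurable g → (∃ C, ∀ y, ‖g y‖ ≤ C) →
    ContinuousOn (fun x => ∫ y, g y ∂μ x) U
  exists_barrier : ∀ x ∉ U, ∃ h, IsBarrier μ x h

variable [BorelSpace K] {U : Set K} {μ : K → Measure K} [∀ x, IsProbabilityMeasure (μ x)]

theorem integral_eq_self_of_tendsto {F : ℕ → C(K, ℝ)} {p : K → ℝ} {C : ℝ}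
    (hF : ∀ n x, ∫ y, F n y ∂μ x = F (n + 1) x) (hC : ∀ n y, ‖F n y‖ ≤ C)
    (hp : ∀ x, Tendsto (F · x) atTop (𝓝 (p x))) (x : K) : ∫ y, p y ∂μ x = p x := by
  refine tendsto_nhds_unique (tendsto_integral_of_dominated_convergence (fun _ => C)
    (fun n => (F n).continuous.aestronglyMeasurable) (integrable_const C)
    (fun n => ae_of_all _ (hC n)) (ae_of_all _ hp)) ?_
  simp_rw [hF]
  exact (hp x).comp (tendsto_add_atTop_nat 1)

variable [CompactSpace K]

namespace IsRegularStrongFeller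

variable (hK : IsRegularStrongFeller U μ)
include hK

theorem isFeller : IsFeller μ := fun g =>
  continuous_iff_continuousAt.2 fun x => by
    by_cases hx : x ∈ U
    · exact (hK.continuousOn_integral g g.continuous.measurable
        ⟨‖g‖, g.norm_coe_le_norm⟩).continuousAt (hK.isOpen.mem_nhds hx)
    · obtain ⟨h, hh⟩ := hK.exists_barrier x hx
      exact hh.continuousAt_integral (hK.eq_dirac x hx) g

theorem continuous_of_harmonic {u : K → ℝ} (hum : Measurable u) (hub : ∃ C, ∀ y, ‖u y‖ ≤ C)
    (harm : ∀ x, ∫ y, u y ∂μ x = u x) (hlsc : LowerSemicontinuous u) (g : C(K, ℝ))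
    (hg : ∀ x ∉ U, g x ≤ u x)
    (hmaj : ∀ q : C(K, ℝ), g ≤ q → IsSuperharmonic μ q → ∀ x, u x ≤ q x) : Continuous u := by
  refine continuous_iff_continuousAt.2 fun x => ?_
  by_cases hx : x ∈ U
  · rw [← funext harm]
    exact (hK.continuousOn_integral u hum hub).continuousAt (hK.isOpen.mem_nhds hx)
  · obtain ⟨h, hh⟩ := hK.exists_barrier x hx
    exact continuousAt_iff_lower_upperSemicontinuousAt.2
      ⟨hlsc x, hh.upperSemicontinuousAt g (hg x hx) hmaj⟩

theorem exists_tendsto_pow_of_le {g : C(K, ℝ)} (hg : g ≤ hK.isFeller.averagingOp ℝ g) :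
    ∃ p, Tendsto (fun n => (hK.isFeller.averagingOp ℝ ^ n) g) atTop (𝓝 p) := by
  set T := hK.isFeller.averagingOp ℝ
  set F := fun n => (T ^ n) g
  have hsucc : ∀ n, F (n + 1) = T (F n) := fun n => by simp only [F, pow_succ', mul_apply_eq_comp]
  have hmono : Monotone F := monotone_nat_of_le_succ fun n => by
    induction n with
    | zero => simpa [F] using hg
    | succ n ih =>
      rw [hsucc (n + 1)]
      nth_rw 1 [hsucc n]
      exact hK.isFeller.monotone_averagingOp ih
  have hle : ∀ q : C(K, ℝ), g ≤ q → IsSuperharmonic μ q → ∀ n, F n ≤ q := by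
    intro q hgq hq n
    induction n with
    | zero => simpa [F] using hgq
    | succ n ih =>
      rw [hsucc n]
      exact fun x => (integral_mono (F n).integrable q.integrable ih).trans (hq x)
  have hC : ∀ n y, ‖F n y‖ ≤ ‖g‖ := fun n y => ((F n).norm_coe_le_norm y).trans
    (T.norm_pow_apply_le hK.isFeller.norm_averagingOp_le n g)
  have hbdd : ∀ x, BddAbove (Set.range fun n => F n x) := fun x =>
    ⟨‖g‖, by rintro _ ⟨n, rfl⟩; exact (le_abs_self _).trans (hC n x)⟩
  set p := fun x => ⨆ n, F n x
  have hp : ∀ x, Tendsto (F · x) atTop (𝓝 (p x)) := fun x =>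
    tendsto_atTop_ciSup (fun m n h => hmono h x) (hbdd x)
  have hpc : Continuous p :=
    hK.continuous_of_harmonic (Measurable.iSup fun n => (F n).continuous.measurable)
      ⟨‖g‖, fun y => le_of_tendsto' (hp y).norm fun n => hC n y⟩
      (integral_eq_self_of_tendsto (fun n x => by rw [hsucc]; rfl) hC hp)
      (lowerSemicontinuous_ciSup hbdd fun n => (F n).continuous.lowerSemicontinuous) g
      (fun x _ => by simpa [F, p] using le_ciSup (hbdd x) 0)
      (fun q hgq hq x => ciSup_le fun n => hle q hgq hq n x)
  exact ⟨⟨p, hpc⟩, ContinuousMap.tendsto_of_monotone_of_pointwise hmono hp⟩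

end IsRegularStrongFeller

end RegularStrongFeller

section FixedPoints

variable {K : Type*} [MetricSpace K] [CompactSpace K] [MeasurableSpace K] [BorelSpace K]
  {μ : K → Measure K} [∀ x, IsProbabilityMeasure (μ x)]

namespace IsFeller

variable (hμ : IsFeller μ)

def nonnegFixedPoints : AddSubmonoid C(K, ℝ) where
  carrier := {v | 0 ≤ v ∧ hμ.averagingOp ℝ v = v}
  add_mem' := fun ⟨hv, hfv⟩ ⟨hw, hfw⟩ => ⟨add_nonneg hv hw, by rw [map_add, hfv, hfw]⟩
  zero_mem' := ⟨le_rfl, map_zero _⟩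

variable {hμ}

theorem add_norm_smul_one_mem_nonnegFixedPoints {v : C(K, ℝ)} (hv : hμ.averagingOp ℝ v = v) :
    v + ‖v‖ • 1 ∈ hμ.nonnegFixedPoints := by
  refine ⟨ContinuousMap.le_def.2 fun x => ?_, by rw [map_add, map_smul, averagingOp_one, hv]⟩
  have := neg_abs_le (v x)
  have := (Real.norm_eq_abs (v x)) ▸ v.norm_coe_le_norm x
  simp only [ContinuousMap.zero_apply, ContinuousMap.add_apply, ContinuousMap.smul_apply,
    ContinuousMap.one_apply, smul_eq_mul, mul_one]
  linarith

/-- The real and imaginary parts of a fixed point become nonnegative fixed points after adding a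
constant. -/
theorem mem_adjoin_of_averagingOp_eq {h : C(K, ℂ)} (hh : hμ.averagingOp ℂ h = h) :
    h ∈ Algebra.adjoin ℂ
      (hμ.nonnegFixedPoints.map (ContinuousMap.ofRealAlgHom ℂ) : Set C(K, ℂ)) := by
  set A := Algebra.adjoin ℂ
    (hμ.nonnegFixedPoints.map (ContinuousMap.ofRealAlgHom ℂ) : Set C(K, ℂ))
  have hpart : ∀ L : ℂ →L[ℝ] ℝ, ContinuousMap.ofRealAlgHom ℂ ((L : C(ℂ, ℝ)).comp h) ∈ A := by
    intro L
    set v := (L : C(ℂ, ℝ)).comp h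
    have hv : hμ.averagingOp ℝ v = v := by rw [averagingOp_comp_clm, hh]
    have hmem : ContinuousMap.ofRealAlgHom ℂ (v + ‖v‖ • 1) ∈ A :=
      Algebra.subset_adjoin ⟨_, add_norm_smul_one_mem_nonnegFixedPoints hv, rfl⟩
    rw [map_add, map_smul, map_one, ← Complex.coe_smul] at hmem
    simpa using A.sub_mem hmem (A.smul_mem A.one_mem (‖v‖ : ℂ))
  have hsplit : h = ContinuousMap.ofRealAlgHom ℂ ((Complex.reCLM : C(ℂ, ℝ)).comp h) +
      Complex.I • ContinuousMap.ofRealAlgHom ℂ ((Complex.imCLM : C(ℂ, ℝ)).comp h) := by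
    ext x
    simpa [mul_comm] using (Complex.re_add_im (h x)).symm
  rw [hsplit]
  exact A.add_mem (hpart Complex.reCLM) (A.smul_mem (hpart Complex.imCLM) _)

end IsFeller

namespace IsRegularStrongFeller

variable {U : Set K} (hK : IsRegularStrongFeller U μ)
include hK

theorem ofRealAlgHom_pow_mem_convergentOrbits {v : C(K, ℝ)}
    (hv : v ∈ hK.isFeller.nonnegFixedPoints) (k : ℕ) :
    ContinuousMap.ofRealAlgHom ℂ v ^ k ∈ (hK.isFeller.averagingOp ℂ).convergentOrbits := by
  obtain ⟨p, hp⟩ := hK.exists_tendsto_pow_of_le (hK.isFeller.pow_le_averagingOp_pow hv.1 hv.2 k)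
  have hpow : ∀ n, (hK.isFeller.averagingOp ℂ ^ n) (ContinuousMap.ofRealAlgHom ℂ v ^ k) =
      ContinuousMap.ofRealAlgHom ℂ ((hK.isFeller.averagingOp ℝ ^ n) (v ^ k)) := by
    intro n
    induction n with
    | zero => simp
    | succ n ih =>
      rw [pow_succ', pow_succ', mul_apply_eq_comp, mul_apply_eq_comp, ih,
        IsFeller.averagingOp_ofRealAlgHom]
  refine ⟨ContinuousMap.ofRealAlgHom ℂ p, ?_⟩
  simp_rw [hpow]
  exact ((ContinuousMap.continuous_ofRealAlgHom ℂ).tendsto p).comp hp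

theorem adjoin_fixedPoints_le_convergentOrbits :
    Subalgebra.toSubmodule (Algebra.adjoin ℂ {h | hK.isFeller.averagingOp ℂ h = h}) ≤
      (hK.isFeller.averagingOp ℂ).convergentOrbits := by
  refine (Subalgebra.toSubmodule.monotone (Algebra.adjoin_le fun h hh =>
    IsFeller.mem_adjoin_of_averagingOp_eq hh)).trans ?_
  refine (Algebra.adjoin_le_span_pow _).trans (Submodule.span_le.2 ?_)
  rintro _ ⟨_, ⟨v, hv, rfl⟩, k, rfl⟩
  exact hK.ofRealAlgHom_pow_mem_convergentOrbits hv k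

end IsRegularStrongFeller

end FixedPoints

section MarkovOperator

variable {K : Type*} [MetricSpace K] [MeasurableSpace K] {U : Set K} {Φ : (↥U → ℂ) → (↥U → ℂ)}

theorem IsMarkovOperator.exists_integral_rep [BorelSpace K] (hM : IsMarkovOperator Φ) :
    ∃ μ : K → Measure K, (∀ x, IsProbabilityMeasure (μ x)) ∧
      (∀ x ∉ U, μ x = Measure.dirac x) ∧
      ∀ f : K → ℂ, Measurable f → (∃ C : ℝ, ∀ y, ‖f y‖ ≤ C) →
        ∀ x, psiFun U Φ f x = ∫ y, f y ∂μ x := by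
  classical
  choose P hP hrep using hM
  refine ⟨fun x => if hx : x ∈ U then (P ⟨x, hx⟩).map Subtype.val else Measure.dirac x,
    fun x => ?_, fun x hx => dif_neg hx, fun f hf ⟨C, hC⟩ x => ?_⟩
  · dsimp only
    split_ifs with hx
    · have := hP ⟨x, hx⟩
      exact Measure.isProbabilityMeasure_map measurable_subtype_coe.aemeasurable
    · infer_instance
  · by_cases hx : x ∈ U
    · simp only [psiFun, dif_pos hx]
      rw [hrep _ (fun v : U => f v) (hf.comp measurable_subtype_coe) ⟨C, fun y => hC y⟩,
        integral_map measurable_subtype_coe.aemeasurable hf.aestronglyMeasurable]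
    · simp only [psiFun, dif_neg hx, integral_dirac]

variable {μ : K → Measure K}
  (hrep : ∀ f : K → ℂ, Measurable f → (∃ C : ℝ, ∀ y, ‖f y‖ ≤ C) →
    ∀ x, psiFun U Φ f x = ∫ y, f y ∂μ x)
include hrep

theorem HasStrongFeller.continuousOn_integral (hSF : HasStrongFeller Φ) {g : K → ℝ}
    (hg : Measurable g) (hC : ∃ C : ℝ, ∀ y, ‖g y‖ ≤ C) :
    ContinuousOn (fun x => ∫ y, g y ∂μ x) U := by
  obtain ⟨C, hC⟩ := hC
  have hf : Measurable fun y => (g y : ℂ) := Complex.measurable_ofReal.comp hg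
  have hfC : ∀ y, ‖(g y : ℂ)‖ ≤ C := fun y => by simpa using hC y
  have hΦ := hSF (fun v : U => (g v : ℂ)) (hf.comp measurable_subtype_coe) ⟨C, fun y => hfC y⟩
  rw [continuousOn_iff_continuous_domRestrict]
  refine (Complex.continuous_re.comp hΦ).congr fun x => ?_
  have := hrep _ hf ⟨C, hfC⟩ x
  rw [psiFun, dif_pos x.2, integral_complex_ofReal] at this
  simp [this]

theorem CondA.exists_barrier [CompactSpace K] [BorelSpace K] [∀ x, IsProbabilityMeasure (μ x)]
    (hA : CondA U Φ) {x₀ : K} (hx₀ : x₀ ∈ Uᶜ) : ∃ h, IsBarrier μ x₀ h := by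
  obtain ⟨h, h₀, hneg, hsub⟩ := hA x₀ hx₀
  have hle : ∀ x, h x ≤ psiFun U Φ h x := fun x => by
    by_cases hx : x ∈ U
    · rw [psiFun, dif_pos hx]; exact hsub ⟨x, hx⟩
    · rw [psiFun, dif_neg hx]
  refine ⟨⟨fun y => (h y).re, by fun_prop⟩, ⟨by simp [h₀], fun y hy => ?_, fun x => ?_⟩⟩
  · simpa using (Complex.lt_def.1 (hneg y hy)).1
  · have hre : ∫ y, (h y).re ∂μ x = (∫ y, h y ∂μ x).re :=
      Complex.reCLM.integral_comp_comm h.integrable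
    have := (Complex.le_def.1 (hle x)).1
    rw [hrep _ h.continuous.measurable ⟨‖h‖, h.norm_coe_le_norm⟩] at this
    simpa [hre] using this

end MarkovOperator

theorem exists_isRegularStrongFeller {K : Type*} [MetricSpace K] [CompactSpace K]
    [MeasurableSpace K] [BorelSpace K] {U : Set K} {Φ : (↥U → ℂ) → (↥U → ℂ)} (hU : IsOpen U)
    (hM : IsMarkovOperator Φ) (hSF : HasStrongFeller Φ) (hA : CondA U Φ) :
    ∃ μ : K → Measure K, ∃ _ : ∀ x, IsProbabilityMeasure (μ x), IsRegularStrongFeller U μ ∧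
      ∀ f : C(K, ℂ), psiFun U Φ f = fun x => ∫ y, f y ∂μ x := by
  obtain ⟨μ, hμ, hdirac, hrep⟩ := hM.exists_integral_rep
  exact ⟨μ, hμ, ⟨hU, hdirac, fun _ hg hC => hSF.continuousOn_integral hrep hg hC,
    fun _ hx => hA.exists_barrier hrep hx⟩,
    fun f => funext (hrep f f.continuous.measurable ⟨‖f‖, f.norm_coe_le_norm⟩)⟩

theorem stmt10_general {K : Type*} [MetricSpace K] [CompactSpace K]
    [MeasurableSpace K] [BorelSpace K]
    (U : Set K) (hUopen : IsOpen U)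
    (Φ : (↥U → ℂ) → (↥U → ℂ))
    (hM : IsMarkovOperator Φ) (hSF : HasStrongFeller Φ)
    (hA : CondA U Φ)
    (f : C(K, ℂ))
    (hf : f ∈ (Algebra.adjoin ℂ
      {h : C(K, ℂ) | psiFun U Φ ⇑h = ⇑h}).topologicalClosure) :
    ∃ p : K → ℂ,
      TendstoUniformly (fun n x => (psiFun U Φ)^[n] ⇑f x) p atTop := by
  obtain ⟨μ, _, hK, hrep⟩ := exists_isRegularStrongFeller hUopen hM hSF hA
  set T := hK.isFeller.averagingOp ℂ
  have hΨ : ∀ g : C(K, ℂ), psiFun U Φ g = T g := fun g => hrep g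
  have hiter : ∀ n, (psiFun U Φ)^[n] f = (T ^ n) f := fun n => by
    induction n with
    | zero => simp
    | succ n ih => rw [Function.iterate_succ_apply', ih, hΨ, pow_succ', mul_apply_eq_comp]
  have hfix : {h : C(K, ℂ) | psiFun U Φ h = h} = {h | T h = h} :=
    Set.ext fun h => show psiFun U Φ h = h ↔ T h = h by rw [hΨ, DFunLike.coe_fn_eq]
  obtain ⟨p, hp⟩ : f ∈ T.convergentOrbits :=
    closure_minimal (fun h hh => hK.adjoin_fixedPoints_le_convergentOrbits (hfix ▸ hh))
      (T.isClosed_convergentOrbits hK.isFeller.norm_averagingOp_le) hf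
  exact ⟨p, by simpa only [hiter] using ContinuousMap.tendsto_iff_tendstoUniformly.1 hp⟩

/-- If `A` is the norm-closed subalgebra of `C(K)` generated by
`Fix(Ψ) = {h : Ψ h = h}`, then `{Ψⁿ f}` converges uniformly on `K` for
every `f ∈ A`. -/
theorem stmt10 {K : Type*} [MetricSpace K] [CompactSpace K]
    [MeasurableSpace K] [BorelSpace K]
    (U : Set K) (hUopen : IsOpen U) (hUdense : Dense U)
    (hbd : ∃ a b : K, a ∈ Uᶜ ∧ b ∈ Uᶜ ∧ a ≠ b)
    (Φ : (↥U → ℂ) → (↥U → ℂ))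
    (hM : IsMarkovOperator Φ) (hSF : HasStrongFeller Φ)
    (hA : CondA U Φ)
    (f : C(K, ℂ))
    (hf : f ∈ (Algebra.adjoin ℂ
      {h : C(K, ℂ) | psiFun U Φ ⇑h = ⇑h}).topologicalClosure) :
    ∃ p : K → ℂ,
      TendstoUniformly (fun n x => (psiFun U Φ)^[n] ⇑f x) p atTop :=
  stmt10_general U hUopen Φ hM hSF hA f hf
end

section
/- For each x ∈ ∂U there exists g ∈ C(K) such that g(x) = 0, g(y) < 0 for every y ∈ ∂U \ {x}, and Φ(g_U) = g_U on U. -/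
open MeasureTheory Filter Topology ComplexOrder

/-!
Write `T` for the action of `Φ` on real functions, `T r x = ∫ r dPₓ`, and let `h` be the barrier
at `x`. Since `h ≤ T h` on `U`, the iterates `Tⁿ h` increase to a bounded limit `g` on `U`, which
is `T`-invariant by dominated convergence and hence continuous by the strong Feller property.
Extended by `h` on `Uᶜ`, `g` is continuous at each boundary point `y`: from below because `g ≥ h`,
and from above because for every `ε > 0` the barrier `q` at `y` yields a supersolution
`h y + ε - c q` dominating `h`, hence dominating every `Tⁿ h`.
-/

section MarkovKernel

variable {X : Type*} [MeasurableSpace X]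

def BddMeasurable (r : X → ℝ) : Prop :=
  Measurable r ∧ ∃ C, ∀ x, |r x| ≤ C

noncomputable def kernelAverage (P : X → Measure X) (r : X → ℝ) : X → ℝ :=
  fun x => ∫ y, r y ∂P x

def StrongFeller [TopologicalSpace X] (P : X → Measure X) : Prop :=
  ∀ r : X → ℝ, BddMeasurable r → Continuous (kernelAverage P r)

lemma BddMeasurable.integrable {r : X → ℝ} (hr : BddMeasurable r) (μ : Measure X)
    [IsFiniteMeasure μ] : Integrable r μ :=
  let ⟨hm, C, hC⟩ := hr
  .of_bound hm.aestronglyMeasurable C (ae_of_all _ fun x => (Real.norm_eq_abs _).trans_le (hC x))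

variable (P : X → Measure X) [∀ x, IsProbabilityMeasure (P x)]

lemma abs_kernelAverage_le {r : X → ℝ} {C : ℝ} (hC : ∀ x, |r x| ≤ C) (x : X) :
    |kernelAverage P r x| ≤ C := by
  simpa [kernelAverage] using norm_integral_le_of_norm_le_const (μ := P x)
    (ae_of_all _ fun y => (Real.norm_eq_abs _).trans_le (hC y))

lemma kernelAverage_mono {r s : X → ℝ} (hr : BddMeasurable r) (hs : BddMeasurable s)
    (hrs : r ≤ s) : kernelAverage P r ≤ kernelAverage P s :=
  fun _ => integral_mono (hr.integrable _) (hs.integrable _) hrs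

lemma kernelAverage_const_sub_mul {q : X → ℝ} (hq : BddMeasurable q) (a c : ℝ) :
    kernelAverage P (fun x => a - c * q x) = fun x => a - c * kernelAverage P q x := by
  funext x
  simp only [kernelAverage]
  rw [integral_sub (integrable_const a) ((hq.integrable _).const_mul c), integral_const,
    integral_const_mul, probReal_univ, one_smul]

lemma BddMeasurable.const_sub_mul {q : X → ℝ} (hq : BddMeasurable q) (a c : ℝ) :
    BddMeasurable fun x => a - c * q x := by
  obtain ⟨hm, C, hC⟩ := hq
  refine ⟨measurable_const.sub (hm.const_mul c), |a| + |c| * C, fun x => ?_⟩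
  calc |a - c * q x| ≤ |a| + |c| * |q x| := by rw [← abs_mul]; exact abs_sub _ _
    _ ≤ |a| + |c| * C := by gcongr; exact hC x

lemma abs_iterate_kernelAverage_le {r : X → ℝ} {C : ℝ} (hC : ∀ x, |r x| ≤ C) (n : ℕ) (x : X) :
    |(kernelAverage P)^[n] r x| ≤ C := by
  induction n generalizing x with
  | zero => exact hC x
  | succ n ih =>
    rw [Function.iterate_succ_apply']
    exact abs_kernelAverage_le P ih x

noncomputable def harmonicLimit (r : X → ℝ) : X → ℝ :=
  fun x => ⨆ n, (kernelAverage P)^[n] r x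

lemma bddAbove_range_iterate_kernelAverage {r : X → ℝ} (hr : BddMeasurable r) (x : X) :
    BddAbove (Set.range fun n => (kernelAverage P)^[n] r x) :=
  let ⟨_, C, hC⟩ := hr
  ⟨C, Set.forall_mem_range.2 fun n => (abs_le.1 (abs_iterate_kernelAverage_le P hC n x)).2⟩

lemma le_harmonicLimit {r : X → ℝ} (hr : BddMeasurable r) : r ≤ harmonicLimit P r :=
  fun x => le_ciSup (bddAbove_range_iterate_kernelAverage P hr x) 0

variable {P} [TopologicalSpace X] [OpensMeasurableSpace X]

lemma StrongFeller.bddMeasurable_kernelAverage (hP : StrongFeller P) {r : X → ℝ}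
    (hr : BddMeasurable r) : BddMeasurable (kernelAverage P r) :=
  let ⟨_, C, hC⟩ := hr
  ⟨(hP r hr).measurable, C, abs_kernelAverage_le P hC⟩

lemma StrongFeller.bddMeasurable_iterate (hP : StrongFeller P) {r : X → ℝ}
    (hr : BddMeasurable r) (n : ℕ) : BddMeasurable ((kernelAverage P)^[n] r) := by
  induction n with
  | zero => exact hr
  | succ n ih =>
    rw [Function.iterate_succ_apply']
    exact hP.bddMeasurable_kernelAverage ih

lemma StrongFeller.monotone_iterate (hP : StrongFeller P) {r : X → ℝ} (hr : BddMeasurable r)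
    (hsub : r ≤ kernelAverage P r) : Monotone fun n => (kernelAverage P)^[n] r := by
  refine monotone_nat_of_le_succ fun n => ?_
  induction n with
  | zero => exact hsub
  | succ n ih =>
    rw [Function.iterate_succ_apply', Function.iterate_succ_apply' _ (n + 1)]
    exact kernelAverage_mono P (hP.bddMeasurable_iterate hr n)
      (hP.bddMeasurable_iterate hr (n + 1)) ih

lemma StrongFeller.iterate_le_of_supersolution (hP : StrongFeller P) {r s : X → ℝ}
    (hr : BddMeasurable r) (hs : BddMeasurable s) (hsup : kernelAverage P s ≤ s) (hrs : r ≤ s)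
    (n : ℕ) : (kernelAverage P)^[n] r ≤ s := by
  induction n with
  | zero => exact hrs
  | succ n ih =>
    rw [Function.iterate_succ_apply']
    exact (kernelAverage_mono P (hP.bddMeasurable_iterate hr n) hs ih).trans hsup

lemma StrongFeller.tendsto_harmonicLimit (hP : StrongFeller P) {r : X → ℝ}
    (hr : BddMeasurable r) (hsub : r ≤ kernelAverage P r) (x : X) :
    Tendsto (fun n => (kernelAverage P)^[n] r x) atTop (𝓝 (harmonicLimit P r x)) :=
  tendsto_atTop_ciSup (fun _ _ hmn => hP.monotone_iterate hr hsub hmn x)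
    (bddAbove_range_iterate_kernelAverage P hr x)

lemma StrongFeller.harmonicLimit_le_of_supersolution (hP : StrongFeller P) {r s : X → ℝ}
    (hr : BddMeasurable r) (hs : BddMeasurable s) (hsup : kernelAverage P s ≤ s) (hrs : r ≤ s) :
    harmonicLimit P r ≤ s :=
  fun x => ciSup_le fun n => hP.iterate_le_of_supersolution hr hs hsup hrs n x

lemma StrongFeller.bddMeasurable_harmonicLimit (hP : StrongFeller P) {r : X → ℝ}
    (hr : BddMeasurable r) (hsub : r ≤ kernelAverage P r) : BddMeasurable (harmonicLimit P r) := by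
  obtain ⟨C, hC⟩ := hr.2
  refine ⟨measurable_of_tendsto_metrizable (fun n => (hP.bddMeasurable_iterate hr n).1)
    (tendsto_pi_nhds.2 (hP.tendsto_harmonicLimit hr hsub)), C, fun x => abs_le.2 ⟨?_, ?_⟩⟩
  · exact (abs_le.1 (hC x)).1.trans (le_harmonicLimit P hr x)
  · exact ciSup_le fun n => (abs_le.1 (abs_iterate_kernelAverage_le P hC n x)).2

lemma StrongFeller.kernelAverage_harmonicLimit (hP : StrongFeller P) {r : X → ℝ}
    (hr : BddMeasurable r) (hsub : r ≤ kernelAverage P r) :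
    kernelAverage P (harmonicLimit P r) = harmonicLimit P r := by
  funext x
  obtain ⟨C, hC⟩ := hr.2
  have hlim : Tendsto (fun n => kernelAverage P ((kernelAverage P)^[n] r) x) atTop
      (𝓝 (kernelAverage P (harmonicLimit P r) x)) :=
    tendsto_integral_of_dominated_convergence (fun _ => C)
      (fun n => (hP.bddMeasurable_iterate hr n).1.aestronglyMeasurable) (integrable_const C)
      (fun n => ae_of_all _ fun y => (Real.norm_eq_abs _).trans_le
        (abs_iterate_kernelAverage_le P hC n y))
      (ae_of_all _ (hP.tendsto_harmonicLimit hr hsub))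
  refine tendsto_nhds_unique hlim ?_
  simp_rw [← Function.iterate_succ_apply' (kernelAverage P)]
  exact (hP.tendsto_harmonicLimit hr hsub x).comp (tendsto_add_atTop_nat 1)

lemma StrongFeller.continuous_harmonicLimit (hP : StrongFeller P) {r : X → ℝ}
    (hr : BddMeasurable r) (hsub : r ≤ kernelAverage P r) : Continuous (harmonicLimit P r) :=
  hP.kernelAverage_harmonicLimit hr hsub ▸ hP _ (hP.bddMeasurable_harmonicLimit hr hsub)

end MarkovKernel

section Topology

variable {K : Type*} [TopologicalSpace K]

lemma exists_le_add_sub_mul_of_peak [CompactSpace K] {f q : K → ℝ} (hf : Continuous f)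
    (hq : Continuous q) {y : K} (hqy : q y = 0) (hq_neg : ∀ k, k ≠ y → q k < 0) {ε : ℝ}
    (hε : 0 < ε) : ∃ c, 0 ≤ c ∧ ∀ k, f k ≤ f y + ε - c * q k := by
  set S := {k | f y + ε ≤ f k}
  by_cases hS : S.Nonempty
  swap
  · exact ⟨0, le_rfl, fun k => by
      have : ¬f y + ε ≤ f k := fun h => hS ⟨k, h⟩
      linarith⟩
  have hS_compact : IsCompact S := (isClosed_le continuous_const hf).isCompact
  obtain ⟨k₀, hk₀S, hk₀⟩ := hS_compact.exists_isMinOn hS hq.neg.continuousOn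
  obtain ⟨k₁, hk₁S, hk₁⟩ := hS_compact.exists_isMaxOn hS hf.continuousOn
  have hk₁ε : f y + ε ≤ f k₁ := hk₁S
  have hk₀y : k₀ ≠ y := by
    rintro rfl
    have : f k₀ + ε ≤ f k₀ := hk₀S
    linarith
  have hδ : 0 < -q k₀ := neg_pos.2 (hq_neg k₀ hk₀y)
  -- `-q` is bounded below by `-q k₀ > 0` on the compact set `S` where `f ≥ f y + ε`
  set c := (f k₁ - f y - ε) / -q k₀
  have hc : 0 ≤ c := div_nonneg (by linarith) hδ.le
  have hcq : c * -q k₀ = f k₁ - f y - ε := div_mul_cancel₀ _ hδ.ne'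
  refine ⟨c, hc, fun k => ?_⟩
  by_cases hk : k ∈ S
  · have h1 : f k ≤ f k₁ := hk₁ hk
    have h2 : c * -q k₀ ≤ c * -q k := mul_le_mul_of_nonneg_left (hk₀ hk) hc
    linarith
  · have hqk : q k ≤ 0 := by
      rcases eq_or_ne k y with rfl | hky
      exacts [hqy.le, (hq_neg k hky).le]
    have h1 : f k < f y + ε := not_le.1 hk
    have h2 : c * q k ≤ 0 := mul_nonpos_of_nonneg_of_nonpos hc hqk
    linarith

lemma continuousAt_of_le_of_forall_le_add {f l : K → ℝ} {y : K} (hl : ContinuousAt l y)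
    (hlf : ∀ k, l k ≤ f k) (hly : l y = f y)
    (hu : ∀ ε > 0, ∃ u : K → ℝ, ContinuousAt u y ∧ (∀ k, f k ≤ u k) ∧ u y ≤ f y + ε) :
    ContinuousAt f y := by
  refine tendsto_order.2 ⟨fun a ha => ?_, fun a ha => ?_⟩
  · filter_upwards [hl.eventually_const_lt (hly ▸ ha)] with k hk using hk.trans_le (hlf k)
  · obtain ⟨u, hu_cont, hfu, huy⟩ := hu ((a - f y) / 2) (by linarith)
    filter_upwards [hu_cont.eventually_lt_const (show u y < a by linarith)] with k hk
      using (hfu k).trans_lt hk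

lemma IsOpen.continuousAt_extend_val {U : Set K} (hU : IsOpen U) {g : U → ℝ} (hg : Continuous g)
    (f : K → ℝ) {k : K} (hk : k ∈ U) : ContinuousAt (Function.extend Subtype.val g f) k := by
  refine (continuousOn_iff_continuous_domRestrict.2 ?_).continuousAt (hU.mem_nhds hk)
  convert hg
  funext v
  exact Subtype.val_injective.extend_apply g f v

end Topology

section HarmonicExtension

variable {K : Type*} [MeasurableSpace K] {U : Set K} (P : U → Measure U)

noncomputable def harmonicExtension (f : K → ℝ) : K → ℝ :=
  Function.extend Subtype.val (harmonicLimit P fun v : U => f v) f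

lemma harmonicExtension_val (f : K → ℝ) (v : U) :
    harmonicExtension P f v = harmonicLimit P (fun v : U => f v) v :=
  Subtype.val_injective.extend_apply _ _ v

lemma harmonicExtension_of_notMem (f : K → ℝ) {k : K} (hk : k ∉ U) :
    harmonicExtension P f k = f k :=
  Function.extend_apply' _ _ _ fun ⟨v, hv⟩ => hk (hv ▸ v.2)

variable [TopologicalSpace K] [CompactSpace K] [OpensMeasurableSpace K]

lemma ContinuousMap.bddMeasurable_restrict (g : C(K, ℝ)) (U : Set K) :
    BddMeasurable fun v : U => g v :=
  ⟨(g.continuous.comp continuous_subtype_val).measurable, ‖g‖, fun v => g.norm_coe_le_norm v⟩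

def IsBarrierAt (y : K) (q : C(K, ℝ)) : Prop :=
  q y = 0 ∧ (∀ k, k ≠ y → q k < 0) ∧ (fun v : U => q v) ≤ kernelAverage P fun v => q v

variable [∀ u, IsProbabilityMeasure (P u)]

lemma le_harmonicExtension (f : C(K, ℝ)) (k : K) : f k ≤ harmonicExtension P f k := by
  by_cases hk : k ∈ U
  · rw [harmonicExtension_val P f ⟨k, hk⟩]
    exact le_harmonicLimit P (f.bddMeasurable_restrict U) ⟨k, hk⟩
  · rw [harmonicExtension_of_notMem P f hk]

variable {P}

lemma StrongFeller.harmonicExtension_le_of_barrier (hP : StrongFeller P) {f q : C(K, ℝ)}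
    {y : K} (hq : IsBarrierAt P y q) {ε : ℝ} (hε : 0 < ε) :
    ∃ c, 0 ≤ c ∧ ∀ k, harmonicExtension P f k ≤ f y + ε - c * q k := by
  obtain ⟨hqy, hq_neg, hq_sub⟩ := hq
  obtain ⟨c, hc, hfc⟩ := exists_le_add_sub_mul_of_peak f.continuous q.continuous hqy hq_neg hε
  refine ⟨c, hc, fun k => ?_⟩
  by_cases hk : k ∈ U
  swap
  · rw [harmonicExtension_of_notMem P f hk]
    exact hfc k
  rw [harmonicExtension_val P f ⟨k, hk⟩]
  have hq_bdd := q.bddMeasurable_restrict U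
  -- `f y + ε - c q` is a supersolution because `q` is a subsolution and `c ≥ 0`
  refine hP.harmonicLimit_le_of_supersolution (f.bddMeasurable_restrict U)
    (hq_bdd.const_sub_mul _ c) (fun v => ?_) (fun v => hfc v) ⟨k, hk⟩
  rw [kernelAverage_const_sub_mul P hq_bdd]
  have := mul_le_mul_of_nonneg_left (hq_sub v) hc
  dsimp only
  linarith

lemma StrongFeller.continuous_harmonicExtension (hP : StrongFeller P) (hU : IsOpen U)
    (hbar : ∀ y ∈ Uᶜ, ∃ q, IsBarrierAt P y q) {f : C(K, ℝ)}
    (hf : (fun v : U => f v) ≤ kernelAverage P fun v => f v) :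
    Continuous (harmonicExtension P f) := by
  refine continuous_iff_continuousAt.2 fun k => ?_
  by_cases hk : k ∈ U
  · exact hU.continuousAt_extend_val
      (hP.continuous_harmonicLimit (f.bddMeasurable_restrict U) hf) f hk
  refine continuousAt_of_le_of_forall_le_add f.continuous.continuousAt
    (le_harmonicExtension P f) (harmonicExtension_of_notMem P f hk).symm fun ε hε => ?_
  obtain ⟨q, hq⟩ := hbar k hk
  obtain ⟨c, -, hc⟩ := hP.harmonicExtension_le_of_barrier hq hε
  refine ⟨fun k' => f k + ε - c * q k', by fun_prop, hc, ?_⟩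
  rw [harmonicExtension_of_notMem P f hk]
  simp [hq.1]

theorem StrongFeller.exists_harmonic_eq_on_compl (hP : StrongFeller P) (hU : IsOpen U)
    (hbar : ∀ y ∈ Uᶜ, ∃ q, IsBarrierAt P y q) {f : C(K, ℝ)}
    (hf : (fun v : U => f v) ≤ kernelAverage P fun v => f v) :
    ∃ g : C(K, ℝ), (∀ y ∈ Uᶜ, g y = f y) ∧
      kernelAverage P (fun v : U => g v) = fun v : U => g v := by
  refine ⟨⟨harmonicExtension P f, hP.continuous_harmonicExtension hU hbar hf⟩,
    fun y hy => harmonicExtension_of_notMem P f hy, ?_⟩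
  have hres : (fun v : U => harmonicExtension P f v) = harmonicLimit P fun v : U => f v :=
    funext (harmonicExtension_val P f)
  simp only [ContinuousMap.coe_mk, hres]
  exact hP.kernelAverage_harmonicLimit (f.bddMeasurable_restrict U) hf

end HarmonicExtension

def HasKernel {X : Type*} [MeasurableSpace X] (Φ : (X → ℂ) → (X → ℂ)) (P : X → Measure X) :
    Prop :=
  ∀ r : X → ℝ, BddMeasurable r → Φ (fun x => (r x : ℂ)) = fun x => (kernelAverage P r x : ℂ)

lemma IsMarkovOperator.exists_kernel {X : Type*} [MeasurableSpace X] {Φ : (X → ℂ) → (X → ℂ)}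
    (hM : IsMarkovOperator Φ) :
    ∃ P : X → Measure X, (∀ x, IsProbabilityMeasure (P x)) ∧ HasKernel Φ P := by
  choose P hP hΦ using hM
  refine ⟨P, hP, fun r ⟨hm, C, hC⟩ => funext fun x => ?_⟩
  rw [hΦ x (fun y => (r y : ℂ)) (Complex.measurable_ofReal.comp hm)
    ⟨C, fun y => by simpa using hC y⟩]
  exact integral_ofReal

lemma HasStrongFeller.strongFeller {X : Type*} [MeasurableSpace X] [TopologicalSpace X]
    {Φ : (X → ℂ) → (X → ℂ)} (hSF : HasStrongFeller Φ) {P : X → Measure X}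
    (hΦP : HasKernel Φ P) :
    StrongFeller P := fun r ⟨hm, C, hC⟩ => by
  have := hSF (fun y => (r y : ℂ)) (Complex.measurable_ofReal.comp hm)
    ⟨C, fun y => by simpa using hC y⟩
  rw [hΦP r ⟨hm, C, hC⟩] at this
  exact Complex.continuous_re.comp this

lemma CondA.exists_barrierAt {K : Type*} [TopologicalSpace K] [CompactSpace K]
    [MeasurableSpace K] [OpensMeasurableSpace K] {U : Set K} {Φ : (U → ℂ) → (U → ℂ)}
    (hA : CondA U Φ) {P : U → Measure U}
    (hΦP : HasKernel Φ P) :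
    ∀ y ∈ Uᶜ, ∃ q, IsBarrierAt P y q := by
  intro y hy
  obtain ⟨h, hhy, hh_neg, hh_sub⟩ := hA y hy
  let q : C(K, ℝ) := ⟨fun k => (h k).re, by fun_prop⟩
  have hhq : ∀ k, h k = (q k : ℂ) := by
    intro k
    rcases eq_or_ne k y with rfl | hky
    · simp [q, hhy]
    · exact Complex.ext rfl (Complex.nonpos_iff.1 (hh_neg k hky).le).2
  refine ⟨q, by simp [q, hhy], fun k hk => by simpa [q] using (Complex.lt_def.1 (hh_neg k hk)).1,
    fun v => ?_⟩
  have := hh_sub v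
  simp only [hhq, hΦP _ (q.bddMeasurable_restrict U)] at this
  exact Complex.real_le_real.1 this

theorem stmt11_general {K : Type*} [MetricSpace K] [CompactSpace K]
    [MeasurableSpace K] [BorelSpace K]
    (U : Set K) (hUopen : IsOpen U)
    (Φ : (↥U → ℂ) → (↥U → ℂ))
    (hM : IsMarkovOperator Φ) (hSF : HasStrongFeller Φ)
    (hA : CondA U Φ) :
    ∀ x ∈ Uᶜ, ∃ g : C(K, ℂ), g x = 0 ∧
      (∀ y ∈ Uᶜ, y ≠ x → g y < 0) ∧
      (∀ u : ↥U, Φ (fun v : ↥U => g v.1) u = g u.1) := by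
  intro x hx
  obtain ⟨P, hP, hΦP⟩ := hM.exists_kernel
  have hbar := hA.exists_barrierAt hΦP
  obtain ⟨q, hqx, hq_neg, hq_sub⟩ := hbar x hx
  obtain ⟨g, hgq, hg⟩ := (hSF.strongFeller hΦP).exists_harmonic_eq_on_compl hUopen hbar hq_sub
  refine ⟨⟨fun k => (g k : ℂ), by fun_prop⟩, ?_, fun y hy hyx => ?_, fun u => ?_⟩
  · simp [hgq x hx, hqx]
  · show (g y : ℂ) < 0
    exact_mod_cast hgq y hy ▸ hq_neg y hyx
  · simp only [ContinuousMap.coe_mk]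
    rw [hΦP _ (g.bddMeasurable_restrict U), hg]

/-- For each `x ∈ ∂U` there exists `g ∈ C(K)` with `g x = 0`,
`g y < 0` for every `y ∈ ∂U \ {x}`, and `Φ (g_U) = g_U` on `U`. -/
theorem stmt11 {K : Type*} [MetricSpace K] [CompactSpace K]
    [MeasurableSpace K] [BorelSpace K]
    (U : Set K) (hUopen : IsOpen U) (hUdense : Dense U)
    (hbd : ∃ a b : K, a ∈ Uᶜ ∧ b ∈ Uᶜ ∧ a ≠ b)
    (Φ : (↥U → ℂ) → (↥U → ℂ))
    (hM : IsMarkovOperator Φ) (hSF : HasStrongFeller Φ)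
    (hA : CondA U Φ) :
    ∀ x ∈ Uᶜ, ∃ g : C(K, ℂ), g x = 0 ∧
      (∀ y ∈ Uᶜ, y ≠ x → g y < 0) ∧
      (∀ u : ↥U, Φ (fun v : ↥U => g v.1) u = g u.1) :=
  stmt11_general U hUopen Φ hM hSF hA
end

section
/- Let Fix(Ψ) = {h ∈ C(K) : Ψ(h) = h} and let A be the norm-closed subalgebra of C(K) generated by Fix(Ψ). Then the restriction map ρ : A → C(∂U), ρ(f) = f|_{∂U}, is surjective. -/
open MeasureTheory Filter Topology ComplexOrder

/-!
The operator `Ψ` is integration against a Markov kernel `μ` that is the Dirac mass at the points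
of `∂U`, so its fixed points are the `μ`-harmonic functions. Given a real `φ ∈ C(∂U)` and `ε > 0`,
the barriers of condition (A) give subharmonic cones `φ p - ε + c h_p`, and the maximum of a
constant and finitely many of them is a continuous subharmonic `F` within `2 ε` of `φ` on `∂U`.
Its iterates under the kernel increase to a harmonic `G` with `G = F` on `∂U` and `‖G‖ ≤ ‖F‖`
(Perron's method); `G` is continuous on `U` by the strong Feller property and at boundary points
because `|F - F x₀| ≤ ε - c h_{x₀}` is preserved by the iteration. So restricting fixed points to
`∂U` hits every `f ∈ C(∂U)` up to `‖f‖ / 2` with norm control, and summing the corrections of a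
geometric iteration inside the closed algebra gives an exact preimage.
-/

section KernelMean

variable {α : Type*} [MeasurableSpace α]

noncomputable def kernelMean (μ : α → Measure α) (f : α → ℝ) (x : α) : ℝ := ∫ y, f y ∂μ x

def IsSubharmonic (μ : α → Measure α) (f : α → ℝ) : Prop := ∀ x, f x ≤ kernelMean μ f x

def IsHarmonic (μ : α → Measure α) (f : α → ℝ) : Prop := kernelMean μ f = f

def IsBddMeasurable (f : α → ℝ) : Prop := Measurable f ∧ ∃ C : ℝ, ∀ x, ‖f x‖ ≤ C

variable {μ : α → Measure α} {f g : α → ℝ}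

lemma kernelMean_mono (hf : ∀ x, Integrable f (μ x)) (hg : ∀ x, Integrable g (μ x))
    (hfg : ∀ y, f y ≤ g y) (x : α) : kernelMean μ f x ≤ kernelMean μ g x :=
  integral_mono (hf x) (hg x) hfg

lemma IsSubharmonic.sup (hf : IsSubharmonic μ f) (hg : IsSubharmonic μ g)
    (hfi : ∀ x, Integrable f (μ x)) (hgi : ∀ x, Integrable g (μ x)) : IsSubharmonic μ (f ⊔ g) :=
  fun x => sup_le
    ((hf x).trans (kernelMean_mono hfi (fun x => (hfi x).sup (hgi x)) (fun _ => le_sup_left) x))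
    ((hg x).trans (kernelMean_mono hgi (fun x => (hfi x).sup (hgi x)) (fun _ => le_sup_right) x))

variable [∀ x, IsProbabilityMeasure (μ x)]

lemma IsBddMeasurable.integrable (hf : IsBddMeasurable f) (ν : Measure α) [IsFiniteMeasure ν] :
    Integrable f ν :=
  .of_bound hf.1.aestronglyMeasurable hf.2.choose (ae_of_all _ hf.2.choose_spec)

lemma isSubharmonic_const (c : ℝ) : IsSubharmonic μ fun _ : α => c := fun x => by
  simp [kernelMean]

lemma norm_kernelMean_le {C : ℝ} (hC : ∀ y, ‖f y‖ ≤ C) (x : α) : ‖kernelMean μ f x‖ ≤ C := by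
  simpa [kernelMean] using norm_integral_le_of_norm_le_const (μ := μ x) (ae_of_all _ hC)

lemma norm_iterate_kernelMean_le {C : ℝ} (hC : ∀ y, ‖f y‖ ≤ C) (n : ℕ) (x : α) :
    ‖(kernelMean μ)^[n] f x‖ ≤ C := by
  induction n generalizing x with
  | zero => exact hC x
  | succ n ih => rw [Function.iterate_succ_apply']; exact norm_kernelMean_le ih x

lemma kernelMean_const_add_mul (hf : ∀ x, Integrable f (μ x)) (a c : ℝ) (x : α) :
    kernelMean μ (fun y => a + c * f y) x = a + c * kernelMean μ f x := by
  simp only [kernelMean]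
  rw [integral_add (integrable_const a) ((hf x).const_mul c), integral_const_mul]
  simp

lemma IsSubharmonic.const_add_mul (hf : IsSubharmonic μ f) (hfi : ∀ x, Integrable f (μ x))
    (a : ℝ) {c : ℝ} (hc : 0 ≤ c) : IsSubharmonic μ fun y => a + c * f y := fun x => by
  rw [kernelMean_const_add_mul hfi]
  exact add_le_add_right (mul_le_mul_of_nonneg_left (hf x) hc) a

lemma abs_iterate_kernelMean_sub_le {b : α → ℝ}
    (hfi : ∀ n x, Integrable ((kernelMean μ)^[n] f) (μ x)) (hbi : ∀ x, Integrable b (μ x))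
    (hb : ∀ x, kernelMean μ b x ≤ b x) {a : ℝ} (hfb : ∀ y, |f y - a| ≤ b y) (n : ℕ) (x : α) :
    |(kernelMean μ)^[n] f x - a| ≤ b x := by
  induction n generalizing x with
  | zero => exact hfb x
  | succ n ih =>
    set u := (kernelMean μ)^[n] f
    have hsub : kernelMean μ u x - a = ∫ y, (u y - a) ∂μ x := by
      rw [integral_sub (hfi n x) (integrable_const a)]
      simp [kernelMean, u]
    calc |(kernelMean μ)^[n + 1] f x - a| = |∫ y, (u y - a) ∂μ x| := by
          rw [Function.iterate_succ_apply', hsub]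
      _ ≤ ∫ y, |u y - a| ∂μ x := abs_integral_le_integral_abs
      _ ≤ kernelMean μ b x :=
          integral_mono ((hfi n x).sub (integrable_const a)).abs (hbi x) ih
      _ ≤ b x := hb x

lemma isHarmonic_of_tendsto {u : ℕ → α → ℝ} {G : α → ℝ} (hu : ∀ n, u (n + 1) = kernelMean μ (u n))
    (hum : ∀ n, Measurable (u n)) {C : ℝ} (huC : ∀ n y, ‖u n y‖ ≤ C)
    (hlim : ∀ y, Tendsto (fun n => u n y) atTop (𝓝 (G y))) : IsHarmonic μ G := by
  funext x
  have hint : Tendsto (fun n => kernelMean μ (u n) x) atTop (𝓝 (kernelMean μ G x)) :=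
    tendsto_integral_of_dominated_convergence (fun _ => C)
      (fun n => (hum n).aestronglyMeasurable) (integrable_const C)
      (fun n => ae_of_all _ (huC n)) (ae_of_all _ hlim)
  refine tendsto_nhds_unique hint ?_
  simpa only [Function.comp_def, hu] using (hlim x).comp (tendsto_add_atTop_nat 1)

end KernelMean

lemma exists_le_mul_of_pos {X : Type*} [TopologicalSpace X] [CompactSpace X] {f g : X → ℝ}
    (hf : Continuous f) (hg : Continuous g) (hg0 : ∀ x, 0 ≤ g x)
    (hfg : ∀ x, 0 ≤ f x → 0 < g x) : ∃ c, 0 ≤ c ∧ ∀ x, f x ≤ c * g x := by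
  obtain ⟨M, hM⟩ := (isClosed_le continuous_const hf).isCompact.bddAbove_image
    (hf.continuousOn.div hg.continuousOn fun x hx => (hfg x hx).ne')
  refine ⟨max M 0, le_max_right _ _, fun x => ?_⟩
  by_cases hx : 0 ≤ f x
  · calc f x = f x / g x * g x := (div_mul_cancel₀ _ (hfg x hx).ne').symm
      _ ≤ max M 0 * g x :=
        mul_le_mul_of_nonneg_right ((hM ⟨x, hx, rfl⟩).trans (le_max_left _ _)) (hg0 x)
  · exact (lt_of_not_ge hx).le.trans (mul_nonneg (le_max_right _ _) (hg0 x))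

lemma continuousAt_of_forall_abs_sub_le {X : Type*} [TopologicalSpace X] {G : X → ℝ} {x₀ : X}
    (h : ∀ ε > 0, ∃ b : X → ℝ, ContinuousAt b x₀ ∧ b x₀ = ε ∧ ∀ y, |G y - G x₀| ≤ b y) :
    ContinuousAt G x₀ := by
  rw [ContinuousAt, Metric.tendsto_nhds]
  intro ε hε
  obtain ⟨b, hb, hbx, hGb⟩ := h (ε / 2) (half_pos hε)
  filter_upwards [hb.eventually (gt_mem_nhds (hbx ▸ half_lt_self hε))] with y hy
  exact (hGb y).trans_lt hy

lemma ContinuousMap.isBddMeasurable {K : Type*} [TopologicalSpace K] [CompactSpace K]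
    [MeasurableSpace K] [OpensMeasurableSpace K] (F : C(K, ℝ)) : IsBddMeasurable F :=
  ⟨F.continuous.measurable, ‖F‖, F.norm_coe_le_norm⟩

section Perron

variable {K : Type*} [TopologicalSpace K] [MeasurableSpace K]

/-- The properties of the kernel of `Ψ` that Perron's method uses: it is absorbing on `Uᶜ`,
strong Feller on `U`, and every boundary point has a barrier as in condition (A). -/
structure IsDirichletKernel (U : Set K) (μ : K → Measure K) : Prop where
  eq_dirac : ∀ x ∉ U, μ x = Measure.dirac x
  measurable_kernelMean : ∀ f, IsBddMeasurable f → Measurable (kernelMean μ f)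
  continuousOn_kernelMean : ∀ f, IsBddMeasurable f → ContinuousOn (kernelMean μ f) U
  exists_barrier : ∀ x ∉ U, ∃ h : C(K, ℝ), h x = 0 ∧ (∀ y ≠ x, h y < 0) ∧ IsSubharmonic μ h

variable {U : Set K} {μ : K → Measure K} {F G : K → ℝ}

lemma IsDirichletKernel.kernelMean_of_notMem (hK : IsDirichletKernel U μ) (hF : Measurable F)
    {x : K} (hx : x ∉ U) : kernelMean μ F x = F x := by
  rw [kernelMean, hK.eq_dirac x hx, integral_dirac' _ _ hF.stronglyMeasurable]

variable [∀ x, IsProbabilityMeasure (μ x)]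

lemma IsDirichletKernel.measurable_iterate (hK : IsDirichletKernel U μ) (hF : IsBddMeasurable F)
    (n : ℕ) : Measurable ((kernelMean μ)^[n] F) := by
  induction n with
  | zero => exact hF.1
  | succ n ih =>
    rw [Function.iterate_succ']
    exact hK.measurable_kernelMean _
      ⟨ih, hF.2.choose, norm_iterate_kernelMean_le hF.2.choose_spec n⟩

lemma IsDirichletKernel.iterate_of_notMem (hK : IsDirichletKernel U μ) (hF : IsBddMeasurable F)
    {x : K} (hx : x ∉ U) (n : ℕ) : (kernelMean μ)^[n] F x = F x := by
  induction n with
  | zero => rfl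
  | succ n ih =>
    rw [Function.iterate_succ_apply', hK.kernelMean_of_notMem (hK.measurable_iterate hF n) hx, ih]

lemma IsDirichletKernel.exists_tendsto_iterate (hK : IsDirichletKernel U μ)
    (hF : IsSubharmonic μ F) (hFm : Measurable F) {C : ℝ} (hC : ∀ y, ‖F y‖ ≤ C) :
    ∃ G : K → ℝ, Measurable G ∧ (∀ y, ‖G y‖ ≤ C) ∧ IsHarmonic μ G ∧ (∀ x ∉ U, G x = F x) ∧
      ∀ y, Tendsto (fun n => (kernelMean μ)^[n] F y) atTop (𝓝 (G y)) := by
  set u : ℕ → K → ℝ := fun n => (kernelMean μ)^[n] F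
  have hFb : IsBddMeasurable F := ⟨hFm, C, hC⟩
  have hum : ∀ n, Measurable (u n) := hK.measurable_iterate hFb
  have huC : ∀ n y, ‖u n y‖ ≤ C := norm_iterate_kernelMean_le hC
  have hui : ∀ n x, Integrable (u n) (μ x) := fun n x =>
    IsBddMeasurable.integrable ⟨hum n, C, huC n⟩ (μ x)
  have hsucc : ∀ n, u (n + 1) = kernelMean μ (u n) := fun n => Function.iterate_succ_apply' _ _ _
  have hmono : ∀ y, Monotone fun n => u n y := by
    refine fun y => monotone_nat_of_le_succ fun n => ?_
    induction n generalizing y with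
    | zero => exact hF y
    | succ n ih =>
      have := kernelMean_mono (hui n) (hui (n + 1)) ih y
      rwa [← hsucc, ← hsucc] at this
  have hlim : ∀ y, Tendsto (fun n => u n y) atTop (𝓝 (⨆ n, u n y)) := fun y =>
    tendsto_atTop_ciSup (hmono y) ⟨C, by rintro _ ⟨n, rfl⟩; exact (le_abs_self _).trans (huC n y)⟩
  refine ⟨fun y => ⨆ n, u n y, measurable_of_tendsto_metrizable hum (tendsto_pi_nhds.2 hlim),
    fun y => le_of_tendsto' (hlim y).norm fun n => huC n y,
    isHarmonic_of_tendsto hsucc hum huC hlim,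
    fun x hx => tendsto_nhds_unique (hlim x) ?_, hlim⟩
  exact tendsto_const_nhds.congr fun n => (hK.iterate_of_notMem hFb hx n).symm

variable [CompactSpace K] [OpensMeasurableSpace K]

/-- Continuity at the boundary: the barrier at `x₀` gives a superharmonic majorant
`ε - c h` of `|F - F x₀|`, which then dominates `|G - G x₀|`. -/
lemma IsDirichletKernel.continuousAt_of_tendsto_iterate (hK : IsDirichletKernel U μ) (F : C(K, ℝ))
    (hlim : ∀ y, Tendsto (fun n => (kernelMean μ)^[n] F y) atTop (𝓝 (G y))) {x₀ : K}
    (hx₀ : x₀ ∉ U) (hGx₀ : G x₀ = F x₀) : ContinuousAt G x₀ := by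
  obtain ⟨h, h0, hneg, hsub⟩ := hK.exists_barrier x₀ hx₀
  refine continuousAt_of_forall_abs_sub_le fun ε hε => ?_
  obtain ⟨c, hc, hFc⟩ := exists_le_mul_of_pos (f := fun y => |F y - F x₀| - ε) (g := fun y => -h y)
    (by fun_prop) (by fun_prop)
    (fun y => by
      rcases eq_or_ne y x₀ with rfl | hy
      · simp [h0]
      · exact (neg_pos.2 (hneg y hy)).le)
    (fun y hy => neg_pos.2 (hneg y fun hyx => by subst hyx; simp at hy; linarith))
  have hhi : ∀ x, Integrable h (μ x) := fun x => h.isBddMeasurable.integrable (μ x)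
  refine ⟨fun y => ε + -c * h y, by fun_prop, by simp [h0], fun y => ?_⟩
  rw [hGx₀]
  refine le_of_tendsto ((hlim y).sub_const (F x₀)).abs (Eventually.of_forall fun n => ?_)
  refine abs_iterate_kernelMean_sub_le (b := fun y => ε + -c * h y) (fun n x => ?_)
    (fun x => ?_) (fun x => ?_) (fun z => by linarith [hFc z]) n y
  · exact IsBddMeasurable.integrable ⟨hK.measurable_iterate F.isBddMeasurable n, ‖F‖,
      norm_iterate_kernelMean_le F.norm_coe_le_norm n⟩ _
  · exact (integrable_const ε).add ((hhi x).const_mul (-c))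
  · rw [kernelMean_const_add_mul hhi]
    nlinarith [hsub x]

theorem IsDirichletKernel.exists_isHarmonic (hK : IsDirichletKernel U μ) (hU : IsOpen U)
    (F : C(K, ℝ)) (hF : IsSubharmonic μ F) :
    ∃ G : C(K, ℝ), IsHarmonic μ G ∧ (∀ x ∉ U, G x = F x) ∧ ‖G‖ ≤ ‖F‖ := by
  obtain ⟨G, hGm, hGC, hGh, hGF, hlim⟩ :=
    hK.exists_tendsto_iterate hF F.continuous.measurable F.norm_coe_le_norm
  have hGU : ContinuousOn G U := by
    have := hK.continuousOn_kernelMean G ⟨hGm, _, hGC⟩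
    rwa [hGh] at this
  have hG : Continuous G := continuous_iff_continuousAt.2 fun x => by
    by_cases hx : x ∈ U
    · exact hGU.continuousAt (hU.mem_nhds hx)
    · exact hK.continuousAt_of_tendsto_iterate F hlim hx (hGF x hx)
  exact ⟨⟨G, hG⟩, hGh, hGF, (ContinuousMap.norm_le _ (norm_nonneg _)).2 hGC⟩

end Perron

section Subsolution

variable {K : Type*} [TopologicalSpace K] [CompactSpace K] [MeasurableSpace K]
  [OpensMeasurableSpace K] {U : Set K} {μ : K → Measure K} [∀ x, IsProbabilityMeasure (μ x)]

lemma isSubharmonic_finset_sup' {ι : Type*} {t : Finset ι} (ht : t.Nonempty) {F : ι → C(K, ℝ)}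
    (hF : ∀ i ∈ t, IsSubharmonic μ (F i)) : IsSubharmonic μ ⇑(t.sup' ht F) :=
  Finset.sup'_induction ht F (p := fun G : C(K, ℝ) => IsSubharmonic μ G)
    (fun G hG H hH => hG.sup hH (fun x => G.isBddMeasurable.integrable (μ x))
      (fun x => H.isBddMeasurable.integrable (μ x))) hF

variable [CompactSpace ↥Uᶜ]

lemma IsDirichletKernel.exists_isSubharmonic_cone (hK : IsDirichletKernel U μ) (φ : C(↥Uᶜ, ℝ))
    {ε : ℝ} (hε : 0 < ε) (p : ↥Uᶜ) :
    ∃ b : C(K, ℝ), IsSubharmonic μ b ∧ b p = φ p - ε ∧ (∀ x : ↥Uᶜ, b x ≤ φ x) ∧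
      ∀ y, b y ≤ φ p - ε := by
  obtain ⟨h, h0, hneg, hsub⟩ := hK.exists_barrier p p.2
  have hh : ∀ y, h y ≤ 0 := fun y => by
    rcases eq_or_ne y p with rfl | hy
    · exact h0.le
    · exact (hneg y hy).le
  obtain ⟨c, hc, hφc⟩ := exists_le_mul_of_pos (X := ↥Uᶜ) (f := fun x => φ p - ε - φ x)
    (g := fun x => -h x) (by fun_prop) (by fun_prop) (fun x => neg_nonneg.2 (hh x))
    (fun x hx => neg_pos.2 (hneg x fun hxp => by rw [Subtype.ext hxp] at hx; linarith))
  refine ⟨ContinuousMap.const K (φ p - ε) + c • h,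
    hsub.const_add_mul (fun x => h.isBddMeasurable.integrable (μ x)) _ hc, by simp [h0],
    fun x => ?_, fun y => ?_⟩
  · simp only [ContinuousMap.add_apply, ContinuousMap.const_apply, ContinuousMap.smul_apply,
      smul_eq_mul]
    linarith [hφc x]
  · simp only [ContinuousMap.add_apply, ContinuousMap.const_apply, ContinuousMap.smul_apply,
      smul_eq_mul]
    nlinarith [hh y]

/-- The maximum of a constant and of finitely many cones, finitely many by compactness of the
boundary. -/
lemma IsDirichletKernel.exists_isSubharmonic_near (hK : IsDirichletKernel U μ) [Nonempty ↥Uᶜ]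
    (φ : C(↥Uᶜ, ℝ)) {ε : ℝ} (hε : 0 < ε) :
    ∃ F : C(K, ℝ), IsSubharmonic μ F ∧ (∀ x : ↥Uᶜ, |F x - φ x| ≤ 2 * ε) ∧
      ‖F‖ ≤ ‖φ‖ + 2 * ε := by
  choose b hb hbp hbφ hble using hK.exists_isSubharmonic_cone φ hε
  obtain ⟨t, ht⟩ := CompactSpace.elim_nhds_subcover (fun p => {x | φ x - 2 * ε < b p x})
    fun p => (isOpen_lt (by fun_prop) (by fun_prop)).mem_nhds (by simp [hbp]; linarith)
  have hcover : ∀ x, ∃ p ∈ t, φ x - 2 * ε < b p x := fun x => by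
    simpa using ht.ge (Set.mem_univ x)
  have htne : t.Nonempty := let ⟨p, hp, _⟩ := hcover (Classical.arbitrary _); ⟨p, hp⟩
  have hφ : ∀ x, |φ x| ≤ ‖φ‖ := φ.norm_coe_le_norm
  refine ⟨ContinuousMap.const K (-(‖φ‖ + 2 * ε)) ⊔ t.sup' htne b, ?_, fun x => ?_, ?_⟩
  · exact (isSubharmonic_const _).sup (isSubharmonic_finset_sup' htne fun p _ => hb p)
      (fun x => integrable_const _)
      (fun x => (t.sup' htne b).isBddMeasurable.integrable (μ x))
  · obtain ⟨p, hp, hpx⟩ := hcover x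
    simp only [ContinuousMap.sup_apply, ContinuousMap.const_apply, ContinuousMap.sup'_apply]
    rw [abs_le]
    constructor
    · linarith [le_sup_of_le_right (a := -(‖φ‖ + 2 * ε))
        (Finset.le_sup' (fun q => b q x) hp)]
    · linarith [sup_le (a := -(‖φ‖ + 2 * ε)) (by linarith [neg_abs_le (φ x), hφ x])
        (Finset.sup'_le htne (fun q => b q x) fun q _ => hbφ q x)]
  · refine (ContinuousMap.norm_le _ (by positivity)).2 fun y => ?_
    simp only [ContinuousMap.sup_apply, ContinuousMap.const_apply, ContinuousMap.sup'_apply,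
      Real.norm_eq_abs, abs_le]
    refine ⟨le_sup_left, sup_le (by linarith [norm_nonneg φ])
      (Finset.sup'_le htne _ fun p _ => ?_)⟩
    linarith [hble p y, (le_abs_self _).trans (hφ p)]

theorem IsDirichletKernel.exists_isHarmonic_near (hK : IsDirichletKernel U μ) (hU : IsOpen U)
    [Nonempty ↥Uᶜ] (φ : C(↥Uᶜ, ℝ)) {ε : ℝ} (hε : 0 < ε) :
    ∃ G : C(K, ℝ), IsHarmonic μ G ∧ (∀ x : ↥Uᶜ, |G x - φ x| ≤ 2 * ε) ∧
      ‖G‖ ≤ ‖φ‖ + 2 * ε := by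
  obtain ⟨F, hF, hFφ, hFn⟩ := hK.exists_isSubharmonic_near φ hε
  obtain ⟨G, hG, hGF, hGn⟩ := hK.exists_isHarmonic hU F hF
  exact ⟨G, hG, fun x => hGF x x.2 ▸ hFφ x, hGn.trans hFn⟩

end Subsolution

/-- As in the open mapping theorem, an exact preimage is the sum of the approximate preimages of
the successive residuals. -/
lemma exists_mem_eq_of_forall_approx {E F σ : Type*} [NormedAddCommGroup E] [CompleteSpace E]
    [NormedAddCommGroup F] [SetLike σ E] [AddSubmonoidClass σ E] (T : E →+ F) (hT : Continuous T)
    {S : σ} (hS : IsClosed (S : Set E)) {C : ℝ}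
    (happrox : ∀ y, ∃ x ∈ S, ‖x‖ ≤ C * ‖y‖ ∧ ‖y - T x‖ ≤ ‖y‖ / 2) (y : F) :
    ∃ x ∈ S, T x = y := by
  choose a haS haC hay using happrox
  set r : F → F := fun z => z - T (a z)
  have hr : ∀ n, ‖r^[n] y‖ ≤ (1 / 2) ^ n * ‖y‖ := fun n => by
    induction n with
    | zero => simp
    | succ n ih =>
      rw [Function.iterate_succ_apply', pow_succ]
      linarith [hay (r^[n] y)]
  set v : ℕ → E := fun n => a (r^[n] y)
  have hv : ∀ n, ‖v n‖ ≤ max C 0 * ‖y‖ * (1 / 2) ^ n := fun n =>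
    calc ‖v n‖ ≤ max C 0 * ‖r^[n] y‖ :=
          (haC _).trans (mul_le_mul_of_nonneg_right (le_max_left _ _) (norm_nonneg _))
      _ ≤ max C 0 * ‖y‖ * (1 / 2) ^ n := by
          rw [mul_assoc, mul_comm ‖y‖]
          exact mul_le_mul_of_nonneg_left (hr n) (le_max_right _ _)
  have hsum : HasSum v (∑' n, v n) :=
    (Summable.of_norm_bounded (summable_geometric_two.mul_left _) hv).hasSum
  have hpartial : ∀ n, T (∑ i ∈ Finset.range n, v i) = y - r^[n] y := fun n => by
    induction n with
    | zero => simp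
    | succ n ih =>
      rw [Finset.sum_range_succ, map_add, ih, Function.iterate_succ_apply']
      simp only [r, v]
      abel
  refine ⟨∑' n, v n, hS.mem_of_tendsto hsum.tendsto_sum_nat
    (Eventually.of_forall fun n => sum_mem fun i _ => haS _), ?_⟩
  have hr0 : Tendsto (fun n => r^[n] y) atTop (𝓝 0) :=
    squeeze_zero_norm hr (by simpa using (tendsto_pow_atTop_nhds_zero_of_lt_one
      (r := (1 / 2 : ℝ)) (by norm_num) (by norm_num)).mul_const ‖y‖)
  refine tendsto_nhds_unique ((hT.tendsto _).comp hsum.tendsto_sum_nat) ?_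
  simpa [Function.comp_def, hpartial] using (tendsto_const_nhds (x := y)).sub hr0

def IsIntegralKernel {α : Type*} [MeasurableSpace α] (μ : α → Measure α)
    (T : (α → ℂ) → (α → ℂ)) : Prop :=
  ∀ f : α → ℂ, Measurable f → (∃ C : ℝ, ∀ y, ‖f y‖ ≤ C) → ∀ x, T f x = ∫ y, f y ∂μ x

section Psi

variable {K : Type*} {U : Set K} {Φ : (↥U → ℂ) → (↥U → ℂ)}

lemma psiFun_of_mem (f : K → ℂ) {x : K} (hx : x ∈ U) :
    psiFun U Φ f x = Φ (fun v : ↥U => f v.1) ⟨x, hx⟩ := dif_pos hx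

lemma psiFun_of_notMem (f : K → ℂ) {x : K} (hx : x ∉ U) : psiFun U Φ f x = f x := dif_neg hx

variable [MeasurableSpace K]

lemma IsMarkovOperator.exists_kernel_psiFun (hM : IsMarkovOperator Φ) :
    ∃ μ : K → Measure K, (∀ x, IsProbabilityMeasure (μ x)) ∧ (∀ x ∉ U, μ x = Measure.dirac x) ∧
      IsIntegralKernel μ (psiFun U Φ) := by
  classical
  choose P hP hPf using hM
  refine ⟨fun x => if hx : x ∈ U then (P ⟨x, hx⟩).map Subtype.val else Measure.dirac x,
    fun x => ?_, fun x hx => dif_neg hx, fun f hf ⟨C, hC⟩ x => ?_⟩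
  · dsimp only
    split_ifs
    · exact Measure.isProbabilityMeasure_map measurable_subtype_coe.aemeasurable
    · infer_instance
  · dsimp only
    by_cases hx : x ∈ U
    · rw [psiFun_of_mem f hx, hPf _ (fun v : ↥U => f v) (hf.comp measurable_subtype_coe)
        ⟨C, fun v => hC v⟩, dif_pos hx,
        integral_map measurable_subtype_coe.aemeasurable hf.aestronglyMeasurable]
    · rw [psiFun_of_notMem f hx, dif_neg hx, integral_dirac' _ _ hf.stronglyMeasurable]

variable {μ : K → Measure K}

lemma psiFun_ofReal (hμ : IsIntegralKernel μ (psiFun U Φ)) {f : K → ℝ} (hf : IsBddMeasurable f) :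
    psiFun U Φ (fun y => (f y : ℂ)) = fun x => (kernelMean μ f x : ℂ) := by
  obtain ⟨hfm, C, hC⟩ := hf
  funext x
  rw [hμ (fun y => (f y : ℂ)) (Complex.measurable_ofReal.comp hfm)
    ⟨C, fun y => (Complex.norm_real _).trans_le (hC y)⟩, kernelMean, integral_complex_ofReal]

variable [TopologicalSpace K]

lemma measurable_psiFun [OpensMeasurableSpace K] (hU : IsOpen U) (hSF : HasStrongFeller Φ)
    {f : K → ℂ} (hf : Measurable f) {C : ℝ} (hC : ∀ y, ‖f y‖ ≤ C) :
    Measurable (psiFun U Φ f) := by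
  refine measurable_of_restrict_of_restrict_compl hU.measurableSet ?_ ?_
  · convert (hSF _ (hf.comp measurable_subtype_coe) ⟨C, fun v => hC v⟩).measurable using 1
    exact funext fun v => psiFun_of_mem f v.2
  · convert (hf.comp measurable_subtype_coe : Measurable fun v : ↥Uᶜ => f v) using 1
    exact funext fun v => psiFun_of_notMem f v.2

lemma continuousOn_psiFun (hSF : HasStrongFeller Φ) {f : K → ℂ} (hf : Measurable f) {C : ℝ}
    (hC : ∀ y, ‖f y‖ ≤ C) : ContinuousOn (psiFun U Φ f) U := by
  rw [continuousOn_iff_continuous_domRestrict]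
  convert hSF _ (hf.comp measurable_subtype_coe) ⟨C, fun v => hC v⟩ using 1
  exact funext fun v => psiFun_of_mem f v.2

lemma isDirichletKernel_of_psiFun [CompactSpace K] [OpensMeasurableSpace K]
    (hU : IsOpen U) (hSF : HasStrongFeller Φ) (hA : CondA U Φ)
    (hdirac : ∀ x ∉ U, μ x = Measure.dirac x) (hμ : IsIntegralKernel μ (psiFun U Φ)) :
    IsDirichletKernel U μ := by
  have hre : ∀ f : K → ℝ, IsBddMeasurable f →
      kernelMean μ f = fun x => (psiFun U Φ (fun y => (f y : ℂ)) x).re := fun f hf => by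
    rw [psiFun_ofReal hμ hf]
    simp only [Complex.ofReal_re]
  refine ⟨hdirac, fun f hf => ?_, fun f hf => ?_, fun x hx => ?_⟩
  · obtain ⟨hfm, C, hC⟩ := hf
    rw [hre f ⟨hfm, C, hC⟩]
    exact Complex.measurable_re.comp (measurable_psiFun hU hSF
      (Complex.measurable_ofReal.comp hfm) fun y => (Complex.norm_real _).trans_le (hC y))
  · obtain ⟨hfm, C, hC⟩ := hf
    rw [hre f ⟨hfm, C, hC⟩]
    exact Complex.continuous_re.comp_continuousOn (continuousOn_psiFun hSF
      (Complex.measurable_ofReal.comp hfm) fun y => (Complex.norm_real _).trans_le (hC y))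
  · obtain ⟨h, h0, hneg, hsub⟩ := hA x hx
    have hreal : ∀ y, ((h y).re : ℂ) = h y := fun y => by
      rcases eq_or_ne y x with rfl | hy
      · simp [h0]
      · exact Complex.ext rfl (Complex.lt_def.1 (hneg y hy)).2.symm
    let hr : C(K, ℝ) := ⟨fun y => (h y).re, by fun_prop⟩
    refine ⟨hr, by simp [hr, h0], fun y hy => (Complex.lt_def.1 (hneg y hy)).1, fun y => ?_⟩
    have hle : h y ≤ psiFun U Φ h y := by
      by_cases hy : y ∈ U
      · rw [psiFun_of_mem _ hy]
        exact hsub ⟨y, hy⟩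
      · rw [psiFun_of_notMem _ hy]
    have hψ := congrFun (psiFun_ofReal hμ hr.isBddMeasurable) y
    simp only [hr, ContinuousMap.coe_mk, hreal] at hψ
    simpa [hψ, hr] using (Complex.le_def.1 hle).1

end Psi

section Approximation

variable {K : Type*} [TopologicalSpace K] [CompactSpace K] [MeasurableSpace K]
  [OpensMeasurableSpace K] {U : Set K} [CompactSpace ↥Uᶜ] {Φ : (↥U → ℂ) → (↥U → ℂ)}
  {μ : K → Measure K} [∀ x, IsProbabilityMeasure (μ x)]

lemma exists_ofReal_mem_adjoin_near [Nonempty ↥Uᶜ] (hU : IsOpen U) (hK : IsDirichletKernel U μ)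
    (hμ : IsIntegralKernel μ (psiFun U Φ)) (φ : C(↥Uᶜ, ℝ)) {ε : ℝ} (hε : 0 < ε) :
    ∃ G : C(K, ℝ), (⟨fun y => (G y : ℂ), by fun_prop⟩ : C(K, ℂ)) ∈
        Algebra.adjoin ℂ {h : C(K, ℂ) | psiFun U Φ ⇑h = ⇑h} ∧
      (∀ x : ↥Uᶜ, |G x - φ x| ≤ 2 * ε) ∧ ∀ y, |G y| ≤ ‖φ‖ + 2 * ε := by
  obtain ⟨G, hG, hGφ, hGn⟩ := hK.exists_isHarmonic_near hU φ hε
  refine ⟨G, Algebra.subset_adjoin ?_, hGφ, fun y => (G.norm_coe_le_norm y).trans hGn⟩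
  change psiFun U Φ (fun y => (G y : ℂ)) = fun y => (G y : ℂ)
  rw [psiFun_ofReal hμ G.isBddMeasurable, hG]

/-- Real and imaginary part of `f` are approximated separately. -/
lemma exists_mem_adjoin_near [Nonempty ↥Uᶜ] (hU : IsOpen U) (hK : IsDirichletKernel U μ)
    (hμ : IsIntegralKernel μ (psiFun U Φ)) (f : C(↥Uᶜ, ℂ)) :
    ∃ g ∈ Algebra.adjoin ℂ {h : C(K, ℂ) | psiFun U Φ ⇑h = ⇑h},
      ‖g‖ ≤ 3 * ‖f‖ ∧ ‖f - g.restrict Uᶜ‖ ≤ ‖f‖ / 2 := by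
  rcases eq_or_ne f 0 with rfl | hf
  · refine ⟨0, zero_mem _, by simp, le_of_eq ?_⟩
    rw [norm_zero, zero_div, norm_eq_zero, sub_eq_zero]
    rfl
  have hε : 0 < ‖f‖ / 8 := by positivity
  have hpart : ∀ p : ℂ → ℝ, Continuous p → (∀ z, |p z| ≤ ‖z‖) → ∃ G : C(K, ℝ),
      (⟨fun y => (G y : ℂ), by fun_prop⟩ : C(K, ℂ)) ∈
        Algebra.adjoin ℂ {h : C(K, ℂ) | psiFun U Φ ⇑h = ⇑h} ∧
      (∀ x : ↥Uᶜ, |G x - p (f x)| ≤ ‖f‖ / 4) ∧ ∀ y, |G y| ≤ 5 / 4 * ‖f‖ := fun p hp hpf => by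
    let φ : C(↥Uᶜ, ℝ) := ⟨fun x => p (f x), by fun_prop⟩
    have hφ : ‖φ‖ ≤ ‖f‖ :=
      (ContinuousMap.norm_le _ (norm_nonneg _)).2 fun x => (hpf _).trans (f.norm_coe_le_norm x)
    obtain ⟨G, hG, hGφ, hGn⟩ := exists_ofReal_mem_adjoin_near hU hK hμ φ hε
    exact ⟨G, hG, fun x => (hGφ x).trans_eq (by ring), fun y => by linarith [hGn y]⟩
  obtain ⟨G₁, hG₁, hG₁f, hG₁n⟩ := hpart Complex.re Complex.continuous_re Complex.abs_re_le_norm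
  obtain ⟨G₂, hG₂, hG₂f, hG₂n⟩ := hpart Complex.im Complex.continuous_im Complex.abs_im_le_norm
  refine ⟨_, add_mem hG₁ (Subalgebra.smul_mem _ hG₂ Complex.I), ?_, ?_⟩
  · refine (ContinuousMap.norm_le _ (by positivity)).2 fun y =>
      (Complex.norm_le_abs_re_add_abs_im _).trans ?_
    simp only [ContinuousMap.add_apply, ContinuousMap.smul_apply, ContinuousMap.coe_mk,
      smul_eq_mul, Complex.add_re, Complex.add_im, Complex.ofReal_re, Complex.ofReal_im,
      Complex.mul_re, Complex.mul_im, Complex.I_re, Complex.I_im, zero_mul, one_mul, mul_zero,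
      sub_zero, zero_add, add_zero]
    linarith [hG₁n y, hG₂n y]
  · refine (ContinuousMap.norm_le _ (by positivity)).2 fun x =>
      (Complex.norm_le_abs_re_add_abs_im _).trans ?_
    simp only [ContinuousMap.sub_apply, ContinuousMap.restrict_apply, ContinuousMap.add_apply,
      ContinuousMap.smul_apply, ContinuousMap.coe_mk, smul_eq_mul, Complex.sub_re,
      Complex.sub_im, Complex.add_re, Complex.add_im, Complex.ofReal_re, Complex.ofReal_im,
      Complex.mul_re, Complex.mul_im, Complex.I_re, Complex.I_im, zero_mul, one_mul, mul_zero,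
      sub_zero, zero_add, add_zero]
    rw [abs_sub_comm, abs_sub_comm (f x).im]
    linarith [hG₁f x, hG₂f x]

end Approximation

theorem stmt12_general {K : Type*} [MetricSpace K] [CompactSpace K]
    [MeasurableSpace K] [BorelSpace K]
    (U : Set K) (hUopen : IsOpen U)
    (Φ : (↥U → ℂ) → (↥U → ℂ))
    (hM : IsMarkovOperator Φ) (hSF : HasStrongFeller Φ)
    (hA : CondA U Φ)
    (f : C(↥(Uᶜ), ℂ)) :
    ∃ g ∈ (Algebra.adjoin ℂ
        {h : C(K, ℂ) | psiFun U Φ ⇑h = ⇑h}).topologicalClosure,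
      ∀ x : ↥(Uᶜ), g x.1 = f x := by
  rcases isEmpty_or_nonempty ↥Uᶜ with hempty | hne
  · exact ⟨0, zero_mem _, isEmptyElim⟩
  have : CompactSpace ↥Uᶜ := isCompact_iff_compactSpace.mp hUopen.isClosed_compl.isCompact
  obtain ⟨μ, hprob, hdirac, hμ⟩ := hM.exists_kernel_psiFun
  have hK := isDirichletKernel_of_psiFun hUopen hSF hA hdirac hμ
  set A := Algebra.adjoin ℂ {h : C(K, ℂ) | psiFun U Φ ⇑h = ⇑h}
  let T : C(K, ℂ) →+ C(↥Uᶜ, ℂ) :=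
    ContinuousMap.compAddMonoidHom' ((ContinuousMap.id K).restrict Uᶜ)
  have happrox : ∀ f, ∃ g ∈ A.topologicalClosure, ‖g‖ ≤ 3 * ‖f‖ ∧ ‖f - T g‖ ≤ ‖f‖ / 2 :=
    fun f => by
      obtain ⟨g, hg, hgn, hgf⟩ := exists_mem_adjoin_near hUopen hK hμ f
      exact ⟨g, A.le_topologicalClosure hg, hgn, hgf⟩
  obtain ⟨g, hg, hgf⟩ := exists_mem_eq_of_forall_approx T (ContinuousMap.continuous_precomp _)
    A.isClosed_topologicalClosure happrox f
  exact ⟨g, hg, fun x => DFunLike.congr_fun hgf x⟩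

/-- The restriction map from the norm-closed subalgebra `A` of
`C(K)` generated by `Fix(Ψ)` to `C(∂U)` is surjective. -/
theorem stmt12 {K : Type*} [MetricSpace K] [CompactSpace K]
    [MeasurableSpace K] [BorelSpace K]
    (U : Set K) (hUopen : IsOpen U) (hUdense : Dense U)
    (hbd : ∃ a b : K, a ∈ Uᶜ ∧ b ∈ Uᶜ ∧ a ≠ b)
    (Φ : (↥U → ℂ) → (↥U → ℂ))
    (hM : IsMarkovOperator Φ) (hSF : HasStrongFeller Φ)
    (hA : CondA U Φ)
    (f : C(↥(Uᶜ), ℂ)) :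
    ∃ g ∈ (Algebra.adjoin ℂ
        {h : C(K, ℂ) | psiFun U Φ ⇑h = ⇑h}).topologicalClosure,
      ∀ x : ↥(Uᶜ), g x.1 = f x :=
  stmt12_general U hUopen Φ hM hSF hA f
end
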